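/- arXiv:2405.11878 — 8 statements merged into one kernel-verified Lean document; each statement's English description precedes it below -/
import Mathlib

section
/- Assume M is atomic over A and strongly ω-homogeneous over A. Let φ(x̄,ȳ) be an L-formula with parameters from A in two n-tuples of free variables and let b̄ be an n-tuple from M. Then the following are equivalent: (a) there exist an elementary extension N of M and an n-tuple ā from N such that ā satisfies the same L-formulas with parameters from A as b̄ does, and N ⊨ φ(ā, b̄); (b) there exists σ ∈ Aut(M/A) with M ⊨ φ(σ(b̄), b̄). -/
/-!
Let `ψ` isolate `tp(b̄/A)`. In `N` the formula `∃ x̄, ψ(x̄) ∧ φ(x̄, ȳ)` holds of `b̄`, witnessed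
by `ā`, so it holds of `b̄` in `M` as well. A witness `c̄ ∈ M` realizes `ψ`, hence has the same
type over `A` as `b̄`, and strong homogeneity gives `σ ∈ Aut(M/A)` with `σ(b̄) = c̄`.
Conversely, take `N = M` and `ā = σ(b̄)`: automorphisms fixing `A` preserve types over `A`.
-/

open FirstOrder FirstOrder.Language

universe u v w

section Defs

variable (L : FirstOrder.Language.{u, v}) (M : Type w) [L.Structure M]

/-- `Aut(M/A)`: the group of `L`-automorphisms of `M` fixing `A` pointwise, realized as a
subgroup of `Equiv.Perm M`. -/
def autFix (A : Set M) : Subgroup (Equiv.Perm M) where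
  carrier := {σ | (∃ e : M ≃[L] M, ⇑e = ⇑σ) ∧ ∀ a ∈ A, σ a = a}
  one_mem' := ⟨⟨Language.Equiv.refl L M, funext fun x => by simp⟩, fun a _ => rfl⟩
  mul_mem' := by
    rintro σ τ ⟨⟨e, he⟩, hσ⟩ ⟨⟨f, hf⟩, hτ⟩
    refine ⟨⟨e.comp f, funext fun x => ?_⟩, fun a ha => ?_⟩
    · simp only [Language.Equiv.comp_apply, he, hf]; rfl
    · simp only [Equiv.Perm.mul_apply, hτ a ha, hσ a ha]
  inv_mem' := by
    rintro σ ⟨⟨e, he⟩, hσ⟩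
    refine ⟨⟨e.symm, funext fun x => ?_⟩, fun a ha => ?_⟩
    · have : e (σ⁻¹ x) = x := by rw [show (e : M → M) = ⇑σ from he]; simp
      simpa using congrArg e.symm this |>.symm.trans (by simp)
    · have : σ a = a := hσ a ha
      calc σ⁻¹ a = σ⁻¹ (σ a) := by rw [this]
      _ = a := by simp

variable {L M}

/-- `M` is atomic over `A`: the type over `A` of every finite tuple from `M` is isolated. -/
def AtomicOver (A : Set M) : Prop :=
  ∀ (n : ℕ) (b : Fin n → M), ∃ ψ : (L[[A]]).Formula (Fin n),
    ψ.Realize b ∧ ∀ χ : (L[[A]]).Formula (Fin n), χ.Realize b →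
      ∀ a : Fin n → M, ψ.Realize a → χ.Realize a

/-- `M` is strongly `ω`-homogeneous over `A`: any two finite tuples satisfying the same
formulas with parameters from `A` are conjugate under `Aut(M/A)`. -/
def StronglyOmegaHomOver (A : Set M) : Prop :=
  ∀ (n : ℕ) (a b : Fin n → M),
    (∀ φ : (L[[A]]).Formula (Fin n), φ.Realize a ↔ φ.Realize b) →
    ∃ σ ∈ autFix L M A, ∀ i, σ (a i) = b i

end Defs

/-- A bundled elementary extension of `M` (in the same universe as `M`). -/
structure ElemExt (L' : FirstOrder.Language.{u, v}) (M : Type w) [L'.Structure M] where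
  carrier : Type w
  [str : L'.Structure carrier]
  emb : M ↪ₑ[L'] carrier

attribute [instance] ElemExt.str

variable {L : FirstOrder.Language.{u, v}} {M : Type w} [L.Structure M]

namespace FirstOrder.Language

theorem Formula.realize_iff_of_forall_realize_imp {α : Type*} {ψ : L.Formula α} {b c : α → M}
    (hψ : ∀ χ : L.Formula α, χ.Realize b → ∀ a : α → M, ψ.Realize a → χ.Realize a)
    (hc : ψ.Realize c) (χ : L.Formula α) : χ.Realize c ↔ χ.Realize b :=
  ⟨fun hχc => Classical.byContradiction fun hχb =>
      Formula.realize_not.mp (hψ χ.not (Formula.realize_not.mpr hχb) c hc) hχc,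
    fun hχb => hψ χ hχb c hc⟩

theorem ElementaryEmbedding.exists_realize_sumElim {N : Type*} [L.Structure N] {γ β : Type*}
    [Finite γ] (f : M ↪ₑ[L] N) (φ : L.Formula (γ ⊕ β)) (b : β → M)
    (h : ∃ a : γ → N, φ.Realize (Sum.elim a (f ∘ b))) :
    ∃ c : γ → M, φ.Realize (Sum.elim c b) := by
  obtain ⟨a, ha⟩ := h
  have hN : ((φ.relabel Sum.swap).iExs γ).Realize (f ∘ b) :=
    Formula.realize_iExs.mpr ⟨a, by rwa [Formula.realize_relabel, Sum.elim_swap]⟩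
  obtain ⟨c, hc⟩ := Formula.realize_iExs.mp ((f.map_formula _ b).mp hN)
  exact ⟨c, by rwa [Formula.realize_relabel, Sum.elim_swap] at hc⟩

end FirstOrder.Language

theorem realize_comp_of_mem_autFix {A : Set M} {σ : Equiv.Perm M} (hσ : σ ∈ autFix L M A)
    {α : Type*} (χ : L[[A]].Formula α) (v : α → M) : χ.Realize (σ ∘ v) ↔ χ.Realize v := by
  obtain ⟨⟨e, he⟩, hfix⟩ := hσ
  -- Read `χ` as an `L`-formula in which the constants from `A` become variables, fixed by `e`.
  have hcon : ⇑e ∘ Sum.elim (fun a : A => (L.con a : M)) v =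
      Sum.elim (fun a : A => (L.con a : M)) (σ ∘ v) := by
    ext (a | i)
    · simp [coe_con, he, hfix a a.2]
    · simp [he]
  have := StrongHomClass.realize_boundedFormula e (BoundedFormula.constantsVarsEquiv χ)
    (v := Sum.elim (fun a : A => (L.con a : M)) v) (xs := default)
  rwa [hcon, Subsingleton.elim (⇑e ∘ default) default, BoundedFormula.realize_constantsVarsEquiv,
    BoundedFormula.realize_constantsVarsEquiv] at this

/-- For `M` atomic and strongly `ω`-homogeneous over `A`: `φ(x̄, b̄)` is realized in some
elementary extension of `M` by a tuple with the same type over `A` as `b̄` if and only if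
`φ(σ(b̄), b̄)` holds for some `σ ∈ Aut(M/A)`. -/
theorem statement4 (A : Set M) (hat : AtomicOver (L := L) A) (hhom : StronglyOmegaHomOver (L := L) A)
    (n : ℕ) (φ : (L[[A]]).Formula (Fin n ⊕ Fin n)) (b : Fin n → M) :
    (∃ (N : ElemExt (L[[A]]) M) (a : Fin n → N.carrier),
      (∀ χ : (L[[A]]).Formula (Fin n), χ.Realize a ↔ χ.Realize b) ∧
      φ.Realize (Sum.elim a (fun i => N.emb (b i)))) ↔
    (∃ σ ∈ autFix L M A, φ.Realize (Sum.elim (fun i => σ (b i)) b)) := by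
  constructor
  · rintro ⟨N, a, hab, hφa⟩
    obtain ⟨ψ, hψb, hψ⟩ := hat n b
    obtain ⟨c, hψc, hφc⟩ : ∃ c : Fin n → M, ψ.Realize c ∧ φ.Realize (Sum.elim c b) := by
      simpa [Formula.realize_relabel] using
        N.emb.exists_realize_sumElim (ψ.relabel Sum.inl ⊓ φ) b
          ⟨a, by simpa [Formula.realize_relabel] using ⟨(hab ψ).mpr hψb, hφa⟩⟩
    obtain ⟨σ, hσ, hσbc⟩ :=
      hhom n b c fun χ => (Formula.realize_iff_of_forall_realize_imp hψ hψc χ).symm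
    exact ⟨σ, hσ, by rwa [show (fun i => σ (b i)) = c from funext hσbc]⟩
  · rintro ⟨σ, hσ, hφ⟩
    exact ⟨⟨M, ElementaryEmbedding.refl _ M⟩, σ ∘ b, fun χ => realize_comp_of_mem_autFix hσ χ b, hφ⟩
end

section
/- Assume M is atomic over A and strongly ω-homogeneous over A. Let φ₁(x̄,ȳ) and φ₂(x̄,ȳ) be L-formulas with parameters from A in two n-tuples of free variables, and let d̄ be an n-tuple from M. Then the definable sets {σ ∈ Aut(M/A) : M ⊨ φ₁(σ(d̄), d̄)} and {σ ∈ Aut(M/A) : M ⊨ φ₂(σ(d̄), d̄)} are equal if and only if for every elementary extension N of M and every n-tuple ā from N satisfying the same L-formulas with parameters from A as d̄, one has N ⊨ φ₁(ā, d̄) ↔ φ₂(ā, d̄). (Equivalently: the map from clopen subsets of the space of types over M extending tp(d̄/A) to definable subsets of Aut(M/A) is injective.) -/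
open FirstOrder FirstOrder.Language

universe u v w

variable {L : FirstOrder.Language.{u, v}} {M : Type w} [L.Structure M]


/-- An `L`-automorphism of `M` fixing `A` pointwise is an `L[[A]]`-automorphism. -/
def equivWithConstants {A : Set M} (e : M ≃[L] M) (he : ∀ a ∈ A, e a = a) :
    M ≃[L[[A]]] M where
  toEquiv := e.toEquiv
  map_fun' := fun {k} f x => by
    cases f with
    | inl f => exact e.map_fun' f x
    | inr c =>
      match k, c with
      | 0, c =>
        exact he c c.2
  map_rel' := fun {k} r x => by
    cases r with
    | inl r => exact e.map_rel' r x
    | inr r => exact isEmptyElim r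

/-- For `M` atomic and strongly `ω`-homogeneous over `A`: two formulas define the same subset
of `Aut(M/A)` (via the tuple `d̄`) if and only if they are equivalent on realizations, in
elementary extensions of `M`, of the type of `d̄` over `A`; i.e. the map from clopen subsets of
the space of types over `M` extending `tp(d̄/A)` to definable subsets of `Aut(M/A)` is
injective. -/
theorem statement5 (A : Set M) (hat : AtomicOver (L := L) A) (hhom : StronglyOmegaHomOver (L := L) A)
    (n : ℕ) (φ₁ φ₂ : (L[[A]]).Formula (Fin n ⊕ Fin n)) (d : Fin n → M) :
    {σ : autFix L M A | φ₁.Realize (Sum.elim (fun i => σ.1 (d i)) d)} =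
      {σ : autFix L M A | φ₂.Realize (Sum.elim (fun i => σ.1 (d i)) d)} ↔
    ∀ (N : ElemExt (L[[A]]) M) (a : Fin n → N.carrier),
      (∀ χ : (L[[A]]).Formula (Fin n), χ.Realize a ↔ χ.Realize d) →
      (φ₁.Realize (Sum.elim a (fun i => N.emb (d i))) ↔
        φ₂.Realize (Sum.elim a (fun i => N.emb (d i)))) := by
  obtain ⟨ψ, hψd, hψiso⟩ := hat n d
  constructor
  · intro hset N a ha
    have key : ∀ θ₁ θ₂ : (L[[A]]).Formula (Fin n ⊕ Fin n),
        {σ : autFix L M A | θ₁.Realize (Sum.elim (fun i => σ.1 (d i)) d)} ⊆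
          {σ : autFix L M A | θ₂.Realize (Sum.elim (fun i => σ.1 (d i)) d)} →
        θ₁.Realize (Sum.elim a (fun i => N.emb (d i))) →
        θ₂.Realize (Sum.elim a (fun i => N.emb (d i))) := by
      intro θ₁ θ₂ hsub h1
      by_contra h2
      set Θ : (L[[A]]).Formula (Fin n) :=
        Formula.iExs (Fin n) ((ψ.relabel Sum.inl ⊓ θ₁ ⊓ ∼θ₂).relabel Sum.swap) with hΘ
      have hN : Θ.Realize (fun i => N.emb (d i)) := by
        rw [hΘ, Formula.realize_iExs]
        refine ⟨a, ?_⟩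
        rw [Formula.realize_relabel]
        rw [show (Sum.elim (fun i => N.emb (d i)) a ∘ Sum.swap) =
            Sum.elim a (fun i => N.emb (d i)) from by funext x; cases x <;> rfl]
        rw [Formula.realize_inf, Formula.realize_inf, Formula.realize_not]
        refine ⟨⟨?_, h1⟩, h2⟩
        rw [Formula.realize_relabel,
          show (Sum.elim a (fun i => N.emb (d i))) ∘ Sum.inl = a from rfl]
        exact (ha ψ).mpr hψd
      have hM : Θ.Realize d := by
        have hmap := N.emb.map_formula Θ d
        rw [show (⇑N.emb ∘ d) = fun i => N.emb (d i) from rfl] at hmap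
        exact hmap.mp hN
      rw [hΘ, Formula.realize_iExs] at hM
      obtain ⟨c, hc⟩ := hM
      rw [Formula.realize_relabel] at hc
      rw [show (Sum.elim d c ∘ Sum.swap) = Sum.elim c d from by
        funext x; cases x <;> rfl] at hc
      rw [Formula.realize_inf, Formula.realize_inf, Formula.realize_not] at hc
      obtain ⟨⟨hcψ, hc1⟩, hc2⟩ := hc
      rw [Formula.realize_relabel, show (Sum.elim c d) ∘ Sum.inl = c from rfl] at hcψ
      have htype : ∀ χ : (L[[A]]).Formula (Fin n), χ.Realize d ↔ χ.Realize c := by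
        intro χ
        constructor
        · intro hh; exact hψiso χ hh c hcψ
        · intro hh; by_contra hd
          exact Formula.realize_not.mp (hψiso (∼χ) (Formula.realize_not.mpr hd) c hcψ) hh
      obtain ⟨σ, hσmem, hσ⟩ := hhom n d c htype
      have hmem : (⟨σ, hσmem⟩ : autFix L M A) ∈
          {σ : autFix L M A | θ₁.Realize (Sum.elim (fun i => σ.1 (d i)) d)} := by
        simp only [Set.mem_setOf_eq]
        rw [show (fun i => σ (d i)) = c from funext hσ]
        exact hc1
      have := hsub hmem
      simp only [Set.mem_setOf_eq] at this
      rw [show (fun i => σ (d i)) = c from funext hσ] at this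
      exact hc2 this
    exact ⟨key φ₁ φ₂ hset.subset, key φ₂ φ₁ hset.superset⟩
  · intro h
    ext σ
    obtain ⟨⟨e, he⟩, hfix⟩ := σ.2
    have he' : ∀ a ∈ A, e a = a := fun a ha => by
      have : e a = σ.1 a := congrFun he a
      rw [this]; exact hfix a ha
    have hg : ∀ χ : (L[[A]]).Formula (Fin n), χ.Realize (fun i => σ.1 (d i)) ↔ χ.Realize d := by
      intro χ
      have hr := StrongHomClass.realize_formula (equivWithConstants e he') χ (v := d)
      rw [show (⇑(equivWithConstants e he') ∘ d) = fun i => σ.1 (d i) from by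
        funext i; exact congrFun he (d i)] at hr
      exact hr
    have := h ⟨M, ElementaryEmbedding.refl _ M⟩ (fun i => σ.1 (d i)) hg
    simpa using this
end

section
/- Assume M = acl(A). Then every clopen subset of Aut(M/A) in the pointwise convergence topology is definable; hence the definable subsets of Aut(M/A) coincide exactly with the clopen subsets of Aut(M/A). -/
open FirstOrder FirstOrder.Language

universe u v w

section Defs

variable (L : FirstOrder.Language.{u, v}) (M : Type w) [L.Structure M]

variable {L M}

/-- A subset of `Aut(M/A)` is definable if it is cut out, via some finite tuple `b` from `M`,
by a formula `φ(x̄, ȳ)` with parameters in `A`, as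
`{σ ∈ Aut(M/A) : M ⊨ φ(σ(b̄), b̄)}`. -/
def IsDefinableSubset (A : Set M) (X : Set (autFix L M A)) : Prop :=
  ∃ (n : ℕ) (φ : (L[[A]]).Formula (Fin n ⊕ Fin n)) (b : Fin n → M),
    X = {σ : autFix L M A | φ.Realize (Sum.elim (fun i => σ.1 (b i)) b)}

/-- `M = acl(A)`: every element of `M` satisfies some formula with parameters from `A` having
only finitely many realizations in `M`. -/
def IsAclOver (A : Set M) : Prop :=
  ∀ x : M, ∃ φ : (L[[A]]).Formula (Fin 1),
    φ.Realize (fun _ => x) ∧ {y : M | φ.Realize (fun _ => y)}.Finite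

/-- The pointwise convergence topology on `Aut(M/A)`: the topology induced from the product
topology on the set of all functions `M → M`, where `M` is given the discrete topology. -/
def autTop (A : Set M) : TopologicalSpace (autFix L M A) :=
  letI : TopologicalSpace M := ⊥
  TopologicalSpace.induced (fun σ => ((σ : Equiv.Perm M) : M → M)) Pi.topologicalSpace

end Defs

variable {L : FirstOrder.Language.{u, v}} {M : Type w} [L.Structure M] {A : Set M}

/-- Lift an `L`-equivalence fixing `A` pointwise to an `L[[A]]`-equivalence. -/
noncomputable def liftEquivWC (e : M ≃[L] M) (he : ∀ a ∈ A, e a = a) : M ≃[L[[A]]] M where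
  toEquiv := e.toEquiv
  map_fun' := by
    intro n f x
    rcases f with f | c
    · simp only [withConstants_funMap_sumInl]
      exact e.map_fun' f x
    · cases n with
      | zero =>
        erw [withConstants_funMap_sumInr]
        exact he c c.2
      | succ n => exact isEmptyElim c
  map_rel' := by
    intro n r x
    rcases r with r | r
    · exact e.map_rel' r x
    · exact isEmptyElim r

theorem autFix_realize (σ : autFix L M A) {α : Type*} (φ : (L[[A]]).Formula α) (v : α → M) :
    φ.Realize (fun a => (σ : Equiv.Perm M) (v a)) ↔ φ.Realize v := by
  obtain ⟨⟨e, he⟩, hA⟩ := σ.2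
  have he' : ∀ a ∈ A, e a = a := fun a ha => (congrFun he a).trans (hA a ha)
  have h := StrongHomClass.realize_formula (L := L[[A]]) (liftEquivWC e he') (φ := φ) (v := v)
  have hc : ⇑(liftEquivWC e he') = ⇑(σ : Equiv.Perm M) := he
  rw [hc] at h
  exact h

private lemma isClopen_findep {N : Type w} (n : ℕ) (v : Fin n → N) (P : (Fin n → N) → Prop) :
    @IsClopen (N → N) (@Pi.topologicalSpace N (fun _ => N) (fun _ => ⊥))
      {g | P (fun i => g (v i))} := by
  letI : TopologicalSpace N := ⊥
  haveI : DiscreteTopology N := ⟨rfl⟩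
  have hc : Continuous (fun (g : N → N) (i : Fin n) => g (v i)) :=
    continuous_pi fun i => continuous_apply (v i)
  exact (isClopen_discrete {c : Fin n → N | P c}).preimage hc

/-- If `M = acl(A)` then the definable subsets of `Aut(M/A)` are exactly the clopen subsets in
the pointwise convergence topology. -/
theorem statement8 (A : Set M) (hacl : IsAclOver (L := L) A) (X : Set (autFix L M A)) :
    @IsClopen (autFix L M A) (autTop (L := L) A) X ↔ IsDefinableSubset A X := by
  classical
  letI : TopologicalSpace M := ⊥
  haveI : DiscreteTopology M := ⟨rfl⟩
  letI tG : TopologicalSpace (autFix L M A) := autTop (L := L) A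
  set π : autFix L M A → (M → M) := fun σ => ((σ : Equiv.Perm M) : M → M) with hπ
  have hind : tG = TopologicalSpace.induced π Pi.topologicalSpace := rfl
  have hcontπ : Continuous π := by rw [continuous_iff_le_induced, hind]
  constructor
  · intro hX
    -- choose algebraic formulas and sets
    choose φA hφA hfin using hacl
    set S : M → Set M := fun x => {y | (φA x).Realize (fun _ => y)} with hS
    have hmem : ∀ x, x ∈ S x := hφA
    have hinv : ∀ (σ : autFix L M A) (x y : M), y ∈ S x → (σ : Equiv.Perm M) y ∈ S x := by
      intro σ x y hy
      exact (autFix_realize σ (φA x) (fun _ => y)).2 hy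
    -- the range of π is closed
    have hrange : Set.range π =
        {g : M → M | (∀ x y : M, g x = g y → x = y) ∧
          (∀ (n : ℕ) (f : L.Functions n) (v : Fin n → M),
            g (Structure.funMap f v) = Structure.funMap f (fun i => g (v i))) ∧
          (∀ (n : ℕ) (r : L.Relations n) (v : Fin n → M),
            (Structure.RelMap r (fun i => g (v i)) ↔ Structure.RelMap r v)) ∧
          (∀ a : M, a ∈ A → g a = a) ∧ (∀ x y : M, y ∈ S x → g y ∈ S x)} := by
      ext g
      constructor
      · rintro ⟨σ, rfl⟩
        obtain ⟨⟨e, he⟩, hA⟩ := σ.2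
        refine ⟨fun x y h => (σ : Equiv.Perm M).injective h, ?_, ?_, hA,
          fun x y hy => hinv σ x y hy⟩
        · intro n f v
          have h := e.map_fun' f v
          calc π σ (Structure.funMap f v) = e (Structure.funMap f v) := (congrFun he _).symm
            _ = Structure.funMap f (⇑e ∘ v) := h
            _ = Structure.funMap f (fun i => π σ (v i)) := by
                congr 1; funext i; exact congrFun he (v i)
        · intro n r v
          have h := e.map_rel' r v
          have hv : (fun i => π σ (v i)) = ⇑e ∘ v := by
            funext i; exact (congrFun he (v i)).symm
          rw [hv]; exact h
      · rintro ⟨hinj, hfun, hrel, hA, hSg⟩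
        have hbij : Function.Bijective g := by
          refine ⟨fun x y h => hinj x y h, fun y => ?_⟩
          have hmaps : Set.MapsTo g (S y) (S y) := fun z hz => hSg y z hz
          have hb : Set.BijOn g (S y) (S y) :=
            ((hfin y).injOn_iff_bijOn_of_mapsTo hmaps).1 (fun a _ b _ h => hinj a b h)
          obtain ⟨z, _, hzy⟩ := hb.surjOn (hmem y)
          exact ⟨z, hzy⟩
        refine ⟨⟨Equiv.ofBijective g hbij,
          ⟨⟨{ toEquiv := Equiv.ofBijective g hbij,
              map_fun' := fun {n} f x => hfun n f x,
              map_rel' := fun {n} r x => hrel n r x }, rfl⟩, hA⟩⟩, rfl⟩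
    have hclosed : IsClosed (Set.range π) := by
      rw [hrange]
      simp only [Set.setOf_and, Set.setOf_forall]
      refine IsClosed.inter (isClosed_iInter fun x => isClosed_iInter fun y => ?_)
        (IsClosed.inter (isClosed_iInter fun n => isClosed_iInter fun f =>
            isClosed_iInter fun v => ?_)
          (IsClosed.inter (isClosed_iInter fun n => isClosed_iInter fun r =>
              isClosed_iInter fun v => ?_)
            (IsClosed.inter (isClosed_iInter fun a => isClosed_iInter fun _ => ?_)
              (isClosed_iInter fun x => isClosed_iInter fun y =>
                isClosed_iInter fun _ => ?_))))
      · exact (isClopen_findep 2 ![x, y] (fun c => c 0 = c 1 → x = y)).isClosed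
      · exact (isClopen_findep (n + 1) (Fin.cons (Structure.funMap f v) v)
          (fun c => c 0 = Structure.funMap f (fun i => c i.succ))).isClosed
      · exact (isClopen_findep n v
          (fun c => Structure.RelMap r c ↔ Structure.RelMap r v)).isClosed
      · exact (isClopen_findep 1 (fun _ => a) (fun c => c 0 = a)).isClosed
      · exact (isClopen_findep 1 (fun _ => y) (fun c => c 0 ∈ S x)).isClosed
    -- compactness of the range of π
    have hsub : Set.range π ⊆ Set.pi Set.univ S := by
      rintro g ⟨σ, rfl⟩ x _
      exact hinv σ x x (hmem x)
    have hK : IsCompact (Set.range π) :=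
      IsCompact.of_isClosed_subset (isCompact_univ_pi fun x => (hfin x).isCompact) hclosed hsub
    have hindA : autTop (L := L) A = TopologicalSpace.induced π Pi.topologicalSpace := rfl
    have hXc : @IsClosed _ (TopologicalSpace.induced π Pi.topologicalSpace) X := by
      rw [← hindA]; exact hX.isClosed
    obtain ⟨D, hD, hXD⟩ := isClosed_induced_iff.1 hXc
    have hXo : @IsOpen _ (TopologicalSpace.induced π Pi.topologicalSpace) X := by
      rw [← hindA]; exact hX.isOpen
    obtain ⟨U, hU, hXU⟩ := isOpen_induced_iff.1 hXo
    have hXcpt : IsCompact (π '' X) := by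
      rw [← hXD, Set.image_preimage_eq_range_inter]
      exact hK.inter_right hD
    have hnbhd : ∀ σ : X, ∃ F : Finset M, ∀ g : M → M, (∀ x ∈ F, g x = π σ.1 x) → g ∈ U := by
      rintro ⟨σ, hσ⟩
      have hσU : π σ ∈ U := by rw [← hXU] at hσ; exact hσ
      obtain ⟨I, u, hu, hI⟩ := (isOpen_pi_iff.1 hU) (π σ) hσU
      refine ⟨I, fun g hg => hI fun x hx => ?_⟩
      rw [hg x (Finset.mem_coe.1 hx)]
      exact (hu x (Finset.mem_coe.1 hx)).2
    choose F hF using hnbhd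
    set W : X → Set (M → M) := fun σ => {g | ∀ x ∈ F σ, g x = π σ.1 x} with hW
    have hWopen : ∀ σ : X, IsOpen (W σ) := by
      intro σ
      have hWeq : W σ = ⋂ x ∈ F σ, {g : M → M | g x = π σ.1 x} := by
        ext g; simp [hW]
      rw [hWeq]
      exact isOpen_biInter_finset fun x _ =>
        (isClopen_findep 1 (fun _ => x) (fun c => c 0 = π σ.1 x)).isOpen
    have hcover : π '' X ⊆ ⋃ σ : X, W σ := by
      rintro g ⟨τ, hτ, rfl⟩
      exact Set.mem_iUnion.2 ⟨⟨τ, hτ⟩, fun x _ => rfl⟩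
    obtain ⟨t, ht⟩ := hXcpt.elim_finite_subcover W hWopen hcover
    have hchar : ∀ σ : autFix L M A,
        σ ∈ X ↔ ∃ τ ∈ t, ∀ x ∈ F τ, π σ x = π τ.1 x := by
      intro σ
      constructor
      · intro hσ
        have h := ht ⟨σ, hσ, rfl⟩
        simp only [Set.mem_iUnion] at h
        obtain ⟨τ, hτt, hτW⟩ := h
        exact ⟨τ, hτt, hτW⟩
      · rintro ⟨τ, _, hτ⟩
        have h : π σ ∈ U := hF τ (π σ) hτ
        rw [← hXU]
        exact h
    set E : Finset M := t.biUnion (fun τ => F τ ∪ (F τ).image (π τ.1)) with hE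
    have hmem1 : ∀ (τ : X), τ ∈ t → ∀ x ∈ F τ, x ∈ E := by
      intro τ hτ x hx
      exact Finset.mem_biUnion.2 ⟨τ, hτ, Finset.mem_union_left _ hx⟩
    have hmem2 : ∀ (τ : X), τ ∈ t → ∀ x ∈ F τ, π τ.1 x ∈ E := by
      intro τ hτ x hx
      exact Finset.mem_biUnion.2 ⟨τ, hτ, Finset.mem_union_right _ (Finset.mem_image_of_mem _ hx)⟩
    set b : Fin E.card → M := fun i => ((E.equivFin.symm i : E) : M) with hb
    have hbix : ∀ (m : M) (hm : m ∈ E), b (E.equivFin ⟨m, hm⟩) = m := by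
      intro m hm
      simp [hb]
    refine ⟨E.card, BoundedFormula.iSup (fun τ : t => BoundedFormula.iInf
      (fun x : F τ.1 => Term.equal (Term.var (Sum.inl (E.equivFin ⟨x.1, hmem1 τ.1 τ.2 x.1 x.2⟩)))
        (Term.var (Sum.inr (E.equivFin ⟨π τ.1.1 x.1, hmem2 τ.1 τ.2 x.1 x.2⟩))))), b, ?_⟩
    ext σ
    rw [Set.mem_setOf_eq, hchar σ]
    simp only [Formula.Realize, BoundedFormula.realize_iSup, BoundedFormula.realize_iInf,
      Finset.mem_attach, true_and, Subtype.exists, Subtype.forall, Term.equal,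
      BoundedFormula.realize_bdEqual, Term.realize_relabel, Term.realize_var,
      Function.comp, Sum.elim_inl, Sum.elim_inr]
    constructor
    · rintro ⟨a, ha, hXa, hat, hfa⟩
      refine ⟨a, ha, hXa, hat, fun x hx => ?_⟩
      rw [hbix, hbix]
      exact hfa x hx
    · rintro ⟨a, ha, hXa, hat, hfa⟩
      refine ⟨a, ha, hXa, hat, fun x hx => ?_⟩
      have h := hfa x hx
      rwa [hbix, hbix] at h
  · rintro ⟨n, φ, b, rfl⟩
    exact (isClopen_findep n b (fun c => φ.Realize (Sum.elim c b))).preimage hcontπ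
end

section
/- Assume M = acl(A). Then there exists exactly one invariant Keisler measure μ on Aut(M/A); moreover, for every finite tuple b̄ from M, μ(Fix(b̄)) = 1/n, where Fix(b̄) = {σ ∈ Aut(M/A) : σ(b̄) = b̄} and n is the (finite) index of Fix(b̄) in Aut(M/A). -/
open FirstOrder FirstOrder.Language

universe u v w

section Defs

variable (L : FirstOrder.Language.{u, v}) (M : Type w) [L.Structure M]

variable {L M}

/-- The fixator of a finite tuple `b`, as a subgroup of `Aut(M/A)`. -/
def fixator (A : Set M) {n : ℕ} (b : Fin n → M) : Subgroup (autFix L M A) where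
  carrier := {σ | ∀ i, σ.1 (b i) = b i}
  one_mem' := fun _ => rfl
  mul_mem' := by
    intro σ τ hσ hτ i
    show σ.1 (τ.1 (b i)) = b i
    rw [hτ i, hσ i]
  inv_mem' := by
    intro σ hσ i
    show σ.1⁻¹ (b i) = b i
    conv_lhs => rw [← hσ i]
    simp

/-- An invariant Keisler measure on `Aut(M/A)`: a finitely additive probability measure on the
Boolean algebra of definable subsets of `Aut(M/A)`, invariant under left translation.  (The
function `μ` is defined on all subsets, but only its values on definable sets are
constrained.) -/
def IsInvariantKeislerMeasure (A : Set M) (μ : Set (autFix L M A) → ℝ) : Prop :=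
  (∀ X : Set (autFix L M A), IsDefinableSubset A X → 0 ≤ μ X ∧ μ X ≤ 1) ∧
  μ Set.univ = 1 ∧
  (∀ X Y : Set (autFix L M A), IsDefinableSubset A X → IsDefinableSubset A Y →
    Disjoint X Y → μ (X ∪ Y) = μ X + μ Y) ∧
  (∀ (τ : autFix L M A) (X : Set (autFix L M A)), IsDefinableSubset A X →
    μ ((fun σ => τ * σ) '' X) = μ X)

end Defs

open Set

section Generic

variable {G : Type*} [Group G]

/-- `X` is a union of left cosets of `H`. -/
def SatBy (H : Subgroup G) (X : Set G) : Prop :=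
  ∀ σ τ : G, σ⁻¹ * τ ∈ H → σ ∈ X → τ ∈ X

theorem SatBy.iff {H : Subgroup G} {X : Set G} (h : SatBy H X) {σ τ : G}
    (hm : σ⁻¹ * τ ∈ H) : σ ∈ X ↔ τ ∈ X :=
  ⟨h σ τ hm, h τ σ (by simpa using H.inv_mem hm)⟩

theorem SatBy.mono {H K : Subgroup G} {X : Set G} (hKH : K ≤ H) (h : SatBy H X) :
    SatBy K X := fun σ τ hm => h σ τ (hKH hm)

theorem SatBy.union {H : Subgroup G} {X Y : Set G} (hX : SatBy H X) (hY : SatBy H Y) :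
    SatBy H (X ∪ Y) := fun σ τ hm hσ =>
  hσ.elim (fun h => Or.inl (hX σ τ hm h)) fun h => Or.inr (hY σ τ hm h)

/-- The natural density of `X` relative to the finite-index subgroup `H`. -/
noncomputable def relDens (H : Subgroup G) (X : Set G) : ℝ :=
  ((QuotientGroup.mk '' X : Set (G ⧸ H)).ncard : ℝ) / (H.index : ℝ)

theorem card_eq_of_le {H K : Subgroup G} (hKH : K ≤ H) {X : Set G} (hX : SatBy H X) :
    (QuotientGroup.mk '' X : Set (G ⧸ K)).ncard
      = (QuotientGroup.mk '' X : Set (G ⧸ H)).ncard * K.relIndex H := by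
  classical
  let e := Subgroup.quotientEquivProdOfLE hKH
  have he1 : ∀ g : G, (e (QuotientGroup.mk g)).1 = QuotientGroup.mk g := fun g => rfl
  have himg : e '' (QuotientGroup.mk '' X) =
      (QuotientGroup.mk '' X : Set (G ⧸ H)) ×ˢ (univ : Set (H ⧸ K.subgroupOf H)) := by
    ext ⟨c, r⟩
    constructor
    · rintro ⟨q, ⟨x, hx, rfl⟩, hq⟩
      rw [← hq]
      exact ⟨by rw [he1 x]; exact ⟨x, hx, rfl⟩, trivial⟩
    · rintro ⟨⟨x, hx, hc⟩, -⟩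
      obtain ⟨y, hy⟩ := QuotientGroup.mk_surjective (e.symm (c, r))
      have hey : e (QuotientGroup.mk y) = (c, r) := by rw [hy]; simp
      have h1 : (QuotientGroup.mk y : G ⧸ H) = QuotientGroup.mk x := by
        have := congrArg Prod.fst hey
        rw [he1 y] at this
        rw [this, ← hc]
      have : x⁻¹ * y ∈ H := QuotientGroup.eq.mp h1.symm
      exact ⟨QuotientGroup.mk y, ⟨y, hX x y this hx, rfl⟩, hey⟩
  calc (QuotientGroup.mk '' X : Set (G ⧸ K)).ncard
      = (e '' (QuotientGroup.mk '' X)).ncard := (ncard_image_of_injective _ e.injective).symm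
    _ = ((QuotientGroup.mk '' X : Set (G ⧸ H)) ×ˢ (univ : Set (H ⧸ K.subgroupOf H))).ncard := by
        rw [himg]
    _ = _ := by
        rw [← Nat.card_coe_set_eq, Nat.card_congr (Equiv.Set.prod _ _), Nat.card_prod,
          Nat.card_coe_set_eq, Nat.card_coe_set_eq, ncard_univ]
        rfl

theorem relDens_eq_of_le {H K : Subgroup G} (hKH : K ≤ H) (hH : H.FiniteIndex)
    (hK : K.FiniteIndex) {X : Set G} (hX : SatBy H X) :
    relDens K X = relDens H X := by
  have h1 : K.relIndex H * H.index = K.index := Subgroup.relIndex_mul_index hKH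
  have hiK : K.index ≠ 0 := hK.index_ne_zero
  have hr : K.relIndex H ≠ 0 := fun h => hiK (by rw [← h1, h, zero_mul])
  rw [relDens, relDens, card_eq_of_le hKH hX, ← h1]
  have hiH : H.index ≠ 0 := hH.index_ne_zero
  have hr' : ((K.relIndex H : ℕ) : ℝ) ≠ 0 := Nat.cast_ne_zero.mpr hr
  have hiH' : ((H.index : ℕ) : ℝ) ≠ 0 := Nat.cast_ne_zero.mpr hiH
  push_cast
  field_simp

theorem relDens_indep {H₁ H₂ : Subgroup G} (h₁ : H₁.FiniteIndex) (h₂ : H₂.FiniteIndex)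
    {X : Set G} (hX₁ : SatBy H₁ X) (hX₂ : SatBy H₂ X) :
    relDens H₁ X = relDens H₂ X := by
  haveI := h₁; haveI := h₂
  have hK : (H₁ ⊓ H₂).FiniteIndex := inferInstance
  rw [← relDens_eq_of_le inf_le_left h₁ hK hX₁, relDens_eq_of_le inf_le_right h₂ hK hX₂]

/-- The canonical density of a set: common value of `relDens H X` over finite-index `H`
saturating `X` (and junk otherwise). -/
noncomputable def dens (X : Set G) : ℝ :=
  ⨆ p : {H : Subgroup G // H.FiniteIndex ∧ SatBy H X}, relDens p.1 X

theorem dens_eq {H : Subgroup G} (hH : H.FiniteIndex) {X : Set G} (hX : SatBy H X) :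
    dens X = relDens H X := by
  have : (fun p : {H' : Subgroup G // H'.FiniteIndex ∧ SatBy H' X} => relDens p.1 X)
      = fun _ => relDens H X := funext fun p => relDens_indep p.2.1 hH p.2.2 hX
  rw [dens, this]
  exact ciSup_const (ι := {H' : Subgroup G // H'.FiniteIndex ∧ SatBy H' X})
    (hι := ⟨⟨H, hH, hX⟩⟩)

theorem dens_univ : dens (univ : Set G) = 1 := by
  have hsat : SatBy ⊤ (univ : Set G) := fun _ _ _ _ => trivial
  rw [dens_eq inferInstance hsat, relDens, image_univ,
    Set.range_eq_univ.mpr QuotientGroup.mk_surjective, ncard_univ, Subgroup.index_top]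
  have : Nat.card (G ⧸ (⊤ : Subgroup G)) = 1 := Subgroup.index_top
  rw [this]; norm_num

theorem dens_nonneg {H : Subgroup G} (hH : H.FiniteIndex) {X : Set G} (hX : SatBy H X) :
    0 ≤ dens X := by
  rw [dens_eq hH hX]
  exact div_nonneg (by positivity) (by positivity)

theorem dens_le_one {H : Subgroup G} (hH : H.FiniteIndex) {X : Set G} (hX : SatBy H X) :
    dens X ≤ 1 := by
  haveI := hH
  rw [dens_eq hH hX, relDens]
  have h1 : (QuotientGroup.mk '' X : Set (G ⧸ H)).ncard ≤ H.index := by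
    rw [show H.index = (univ : Set (G ⧸ H)).ncard by rw [ncard_univ]; rfl]
    exact ncard_le_ncard (subset_univ _) (toFinite _)
  have h2 : (0:ℝ) < H.index := by
    have := hH.index_ne_zero; positivity
  rw [div_le_one h2]
  exact_mod_cast h1

theorem dens_union {H₁ H₂ : Subgroup G} (h₁ : H₁.FiniteIndex) (h₂ : H₂.FiniteIndex)
    {X Y : Set G} (hX : SatBy H₁ X) (hY : SatBy H₂ Y) (hd : Disjoint X Y) :
    dens (X ∪ Y) = dens X + dens Y := by
  haveI := h₁; haveI := h₂
  set K := H₁ ⊓ H₂ with hK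
  have hKfi : K.FiniteIndex := inferInstance
  have hXK : SatBy K X := hX.mono inf_le_left
  have hYK : SatBy K Y := hY.mono inf_le_right
  have hUK : SatBy K (X ∪ Y) := hXK.union hYK
  rw [dens_eq hKfi hUK, dens_eq hKfi hXK, dens_eq hKfi hYK, relDens, relDens, relDens,
    image_union]
  have hdisj : Disjoint (QuotientGroup.mk '' X : Set (G ⧸ K)) (QuotientGroup.mk '' Y) := by
    rw [Set.disjoint_left]
    rintro c ⟨x, hx, rfl⟩ ⟨y, hy, hc⟩
    have : y⁻¹ * x ∈ K := QuotientGroup.eq.mp hc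
    exact (Set.disjoint_left.mp hd hx) (hYK y x this hy)
  haveI : Finite (G ⧸ K) := K.finite_quotient_of_finiteIndex
  rw [ncard_union_eq hdisj (toFinite _) (toFinite _)]
  push_cast
  rw [add_div]

theorem dens_smul (τ : G) {H : Subgroup G} (hH : H.FiniteIndex) {X : Set G}
    (hX : SatBy H X) : dens ((fun σ => τ * σ) '' X) = dens X := by
  have hsat : SatBy H ((fun σ => τ * σ) '' X) := by
    rintro ρ σ hm ⟨x, hx, rfl⟩
    refine ⟨τ⁻¹ * σ, hX x (τ⁻¹ * σ) ?_ hx, by group⟩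
    convert hm using 1
    group
  rw [dens_eq hH hsat, dens_eq hH hX, relDens, relDens]
  have himg : (QuotientGroup.mk '' ((fun σ => τ * σ) '' X) : Set (G ⧸ H))
      = (fun q => τ • q) '' (QuotientGroup.mk '' X) := by
    rw [Set.image_image, Set.image_image]
    rfl
  rw [himg, ncard_image_of_injective _ (MulAction.injective τ)]

theorem dens_subgroup {H : Subgroup G} (hH : H.FiniteIndex) :
    dens (H : Set G) = 1 / (H.index : ℝ) := by
  have hsat : SatBy H (H : Set G) := by
    intro σ τ hm hσ
    have : σ * (σ⁻¹ * τ) ∈ H := H.mul_mem hσ hm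
    simpa using this
  rw [dens_eq hH hsat, relDens]
  have himg : (QuotientGroup.mk '' (H : Set G) : Set (G ⧸ H)) = {(QuotientGroup.mk (1:G) : G ⧸ H)} := by
    ext q
    constructor
    · rintro ⟨x, hx, rfl⟩
      show (QuotientGroup.mk x : G ⧸ H) = QuotientGroup.mk 1
      rw [QuotientGroup.eq]
      simpa using H.inv_mem hx
    · rintro rfl
      exact ⟨1, H.one_mem, rfl⟩
  rw [himg, ncard_singleton]
  norm_num

/-- A saturated set is the preimage of its image in the quotient. -/
theorem sat_preimage_eq {H : Subgroup G} {X : Set G} (hX : SatBy H X) :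
    X = QuotientGroup.mk ⁻¹' (QuotientGroup.mk '' X : Set (G ⧸ H)) := by
  ext x
  constructor
  · exact fun hx => ⟨x, hx, rfl⟩
  · rintro ⟨y, hy, hxy⟩
    exact hX y x (QuotientGroup.eq.mp hxy) hy

end Generic

section MT

variable {L : FirstOrder.Language.{u, v}} {M : Type w} [L.Structure M] {A : Set M}

/-- Lift an `L`-equivalence fixing `A` pointwise to an `L[[A]]`-equivalence. -/
def liftWithConstants (e : M ≃[L] M) (hA : ∀ a ∈ A, e a = a) : M ≃[L[[A]]] M where
  toEquiv := e.toEquiv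
  map_fun' := by
    intro n f x
    cases f with
    | inl f => exact e.map_fun' f x
    | inr c =>
      cases n with
      | zero => exact hA c c.2
      | succ n => exact isEmptyElim c
  map_rel' := by
    intro n r x
    cases r with
    | inl r => exact e.map_rel' r x
    | inr r => exact (show Empty from r).elim

theorem realize_autFix {α : Type*} (σ : autFix L M A) (φ : (L[[A]]).Formula α) (v : α → M) :
    φ.Realize (fun i => σ.1 (v i)) ↔ φ.Realize v := by
  obtain ⟨⟨e, he⟩, hfix⟩ := σ.2
  have hA : ∀ a ∈ A, e a = a := by
    intro a ha
    rw [show ⇑e = ⇑σ.1 from he]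
    exact hfix a ha
  have h := StrongHomClass.realize_formula (liftWithConstants e hA) (φ := φ) (v := v)
  rw [← h]
  have hco : ((liftWithConstants e hA) ∘ v) = fun i => σ.1 (v i) := by
    funext i
    show e (v i) = σ.1 (v i)
    rw [show ⇑e = ⇑σ.1 from he]
  rw [hco]

theorem mem_fixator_iff {n : ℕ} {b : Fin n → M} {σ : autFix L M A} :
    σ ∈ fixator A b ↔ ∀ i, σ.1 (b i) = b i := Iff.rfl

theorem satBy_fixator {n : ℕ} (φ : (L[[A]]).Formula (Fin n ⊕ Fin n)) (b : Fin n → M) :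
    SatBy (fixator A b)
      {σ : autFix L M A | φ.Realize (Sum.elim (fun i => σ.1 (b i)) b)} := by
  intro σ τ hm hσ
  have hb : ∀ i, τ.1 (b i) = σ.1 (b i) := by
    intro i
    have h2 : σ.1⁻¹ (τ.1 (b i)) = b i := by
      have := mem_fixator_iff.mp hm i
      simpa using this
    calc τ.1 (b i) = σ.1 (σ.1⁻¹ (τ.1 (b i))) := (σ.1.apply_symm_apply _).symm
      _ = σ.1 (b i) := by rw [h2]
  have hv : (Sum.elim (fun i => τ.1 (b i)) b) = (Sum.elim (fun i => σ.1 (b i)) b) := by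
    funext j
    rcases j with i | i
    · exact hb i
    · rfl
  simp only [Set.mem_setOf_eq] at hσ ⊢
  rw [hv]
  exact hσ

theorem fixator_finiteIndex (hacl : IsAclOver (L := L) A) {n : ℕ} (b : Fin n → M) :
    (fixator (L := L) A b).FiniteIndex := by
  classical
  choose φ hφ1 hφ2 using fun i => hacl (b i)
  set S : ∀ _ : Fin n, Set M := fun i => {y | (φ i).Realize (fun _ => y)} with hS
  have hfin : (Set.pi Set.univ S).Finite := Set.Finite.pi fun i => hφ2 i
  let f : (autFix L M A ⧸ fixator A b) → (Fin n → M) := fun q =>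
    Quotient.liftOn' q (fun σ => fun i => σ.1 (b i)) (by
      intro σ τ h
      have hm : σ⁻¹ * τ ∈ fixator A b := QuotientGroup.leftRel_apply.mp h
      funext i
      have h2 : σ.1⁻¹ (τ.1 (b i)) = b i := by
        have := mem_fixator_iff.mp hm i
        simpa using this
      calc σ.1 (b i) = σ.1 (σ.1⁻¹ (τ.1 (b i))) := by rw [h2]
        _ = τ.1 (b i) := σ.1.apply_symm_apply _)
  have hinj : Function.Injective f := by
    intro q q'
    refine Quotient.inductionOn₂' q q' ?_
    intro σ τ h
    apply Quotient.sound'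
    rw [QuotientGroup.leftRel_apply]
    rw [mem_fixator_iff]
    intro i
    have := congrFun h i
    have h3 : σ.1 (b i) = τ.1 (b i) := this
    show (↑(σ⁻¹ * τ) : Equiv.Perm M) (b i) = b i
    simp only [Subgroup.coe_mul, Subgroup.coe_inv, Equiv.Perm.mul_apply]
    rw [← h3]
    exact σ.1.symm_apply_apply _
  have hrange : ∀ q, f q ∈ Set.pi Set.univ S := by
    refine fun q => Quotient.inductionOn' q ?_
    intro σ i _
    show (φ i).Realize (fun _ => σ.1 (b i))
    exact (realize_autFix σ (φ i) fun _ => b i).mpr (hφ1 i)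
  haveI : Finite (Set.pi Set.univ S) := hfin.to_subtype
  haveI : Finite (autFix L M A ⧸ fixator A b) :=
    Finite.of_injective (fun q => (⟨f q, hrange q⟩ : Set.pi Set.univ S))
      fun q q' h => hinj (congrArg Subtype.val h)
  exact Subgroup.finiteIndex_of_finite_quotient (H := fixator (L := L) A b)

theorem definableSubset_empty : IsDefinableSubset A (∅ : Set (autFix L M A)) := by
  refine ⟨0, ⊥, fun i => i.elim0, ?_⟩
  ext σ
  simp [Formula.realize_bot]

theorem definableSubset_union {X Y : Set (autFix L M A)} (hX : IsDefinableSubset A X)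
    (hY : IsDefinableSubset A Y) : IsDefinableSubset A (X ∪ Y) := by
  obtain ⟨n1, φ1, b1, rfl⟩ := hX
  obtain ⟨n2, φ2, b2, rfl⟩ := hY
  refine ⟨n1 + n2,
    (φ1.relabel (Sum.map (Fin.castAdd n2) (Fin.castAdd n2))) ⊔
      (φ2.relabel (Sum.map (Fin.natAdd n1) (Fin.natAdd n1))),
    Fin.append b1 b2, ?_⟩
  ext σ
  simp only [Set.mem_union, Set.mem_setOf_eq, Formula.realize_sup, Formula.realize_relabel]
  have h1 : ((Sum.elim (fun i => σ.1 (Fin.append b1 b2 i)) (Fin.append b1 b2)) ∘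
      (Sum.map (Fin.castAdd n2) (Fin.castAdd n2)))
      = Sum.elim (fun i => σ.1 (b1 i)) b1 := by
    funext j
    rcases j with i | i <;> simp [Fin.append_left]
  have h2 : ((Sum.elim (fun i => σ.1 (Fin.append b1 b2 i)) (Fin.append b1 b2)) ∘
      (Sum.map (Fin.natAdd n1) (Fin.natAdd n1)))
      = Sum.elim (fun i => σ.1 (b2 i)) b2 := by
    funext j
    rcases j with i | i <;> simp [Fin.append_right]
  rw [h1, h2]

theorem frm_realize_iInf {α β : Type*} [Finite β] {L' : FirstOrder.Language}
    {N : Type*} [L'.Structure N] (f : β → L'.Formula α) (v : α → N) :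
    Formula.Realize (BoundedFormula.iInf f) v ↔ ∀ b, Formula.Realize (f b) v :=
  BoundedFormula.realize_iInf

theorem definableSubset_fixator {n : ℕ} (b : Fin n → M) :
    IsDefinableSubset A ((fixator A b : Subgroup (autFix L M A)) : Set (autFix L M A)) := by
  classical
  refine ⟨n, BoundedFormula.iInf
    (fun i : Fin n => Term.equal (Term.var (Sum.inl i)) (Term.var (Sum.inr i))), b, ?_⟩
  ext σ
  simp only [SetLike.mem_coe, mem_fixator_iff, Set.mem_setOf_eq, frm_realize_iInf,
    Finset.mem_univ, forall_true_left, Formula.realize_equal, Term.realize_var,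
    Sum.elim_inl, Sum.elim_inr, true_implies]

theorem coset_eq {n : ℕ} (b : Fin n → M) (τ : autFix L M A) :
    ((fun σ => τ * σ) '' ((fixator A b : Subgroup (autFix L M A)) : Set (autFix L M A)))
      = {σ : autFix L M A | ∀ i, σ.1 (b i) = τ.1 (b i)} := by
  ext σ
  constructor
  · rintro ⟨ρ, hρ, rfl⟩ i
    show (↑(τ * ρ) : Equiv.Perm M) (b i) = τ.1 (b i)
    rw [Subgroup.coe_mul, Equiv.Perm.mul_apply, mem_fixator_iff.mp hρ i]
  · intro h
    refine ⟨τ⁻¹ * σ, mem_fixator_iff.mpr fun i => ?_, by group⟩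
    show (↑(τ⁻¹ * σ) : Equiv.Perm M) (b i) = b i
    rw [Subgroup.coe_mul, Subgroup.coe_inv, Equiv.Perm.mul_apply, h i]
    exact τ.1.symm_apply_apply _

theorem definableSubset_coset {n : ℕ} (b : Fin n → M) (τ : autFix L M A) :
    IsDefinableSubset A
      ((fun σ => τ * σ) '' ((fixator A b : Subgroup (autFix L M A)) : Set (autFix L M A))) := by
  classical
  refine ⟨n + n, BoundedFormula.iInf
    (fun i : Fin n => Term.equal (Term.var (Sum.inl (Fin.castAdd n i)))
      (Term.var (Sum.inr (Fin.natAdd n i)))),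
    Fin.append b (fun i => τ.1 (b i)), ?_⟩
  rw [coset_eq]
  ext σ
  simp only [Set.mem_setOf_eq, frm_realize_iInf, Finset.mem_univ, Formula.realize_equal,
    Term.realize_var, Sum.elim_inl, Sum.elim_inr, true_implies, Fin.append_left,
    Fin.append_right]

end MT

section Main

variable {L : FirstOrder.Language.{u, v}} {M : Type w} [L.Structure M] {A : Set M}

theorem nu_eq_dens (hacl : IsAclOver (L := L) A) {ν : Set (autFix L M A) → ℝ}
    (hν : IsInvariantKeislerMeasure A ν) {X : Set (autFix L M A)}
    (hX : IsDefinableSubset A X) : ν X = dens X := by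
  classical
  obtain ⟨hbnd, hu, hadd, hinv⟩ := hν
  obtain ⟨n, φ, b, rfl⟩ := hX
  set Xs := {σ : autFix L M A | φ.Realize (Sum.elim (fun i => σ.1 (b i)) b)} with hXs
  set H := fixator (L := L) A b with hHdef
  have hHfi : H.FiniteIndex := fixator_finiteIndex hacl b
  have hsat : SatBy H Xs := satBy_fixator φ b
  have hν0 : ν ∅ = 0 := by
    have h := hadd ∅ ∅ definableSubset_empty definableSubset_empty (by simp)
    simp only [Set.union_empty] at h
    linarith
  haveI : Finite (autFix L M A ⧸ H) := H.finite_quotient_of_finiteIndex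
  haveI : Fintype (autFix L M A ⧸ H) := Fintype.ofFinite _
  have key : ∀ F : Finset (autFix L M A ⧸ H),
      IsDefinableSubset A (QuotientGroup.mk ⁻¹' (F : Set (autFix L M A ⧸ H))) ∧
      ν (QuotientGroup.mk ⁻¹' (F : Set (autFix L M A ⧸ H)))
        = F.card * ν (H : Set (autFix L M A)) := by
    intro F
    induction F using Finset.induction_on with
    | empty =>
      constructor
      · simpa using (definableSubset_empty (A := A))
      · simp [hν0]
    | @insert c F hc ih =>
      obtain ⟨τ, hτ⟩ := QuotientGroup.mk_surjective c
      have hsingle : (QuotientGroup.mk ⁻¹' ({c} : Set (autFix L M A ⧸ H)))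
          = (fun σ => τ * σ) '' (H : Set (autFix L M A)) := by
        ext σ
        simp only [Set.mem_preimage, Set.mem_singleton_iff]
        constructor
        · intro hσ
          exact ⟨τ⁻¹ * σ, QuotientGroup.eq.mp (hτ.trans hσ.symm), by group⟩
        · rintro ⟨ρ, hρ, rfl⟩
          rw [← hτ]
          symm
          rw [QuotientGroup.eq]
          simpa using hρ
      have hdefC : IsDefinableSubset A
          (QuotientGroup.mk ⁻¹' ({c} : Set (autFix L M A ⧸ H))) := by
        rw [hsingle]; exact definableSubset_coset b τ
      have hνC : ν (QuotientGroup.mk ⁻¹' ({c} : Set (autFix L M A ⧸ H)))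
          = ν (H : Set (autFix L M A)) := by
        rw [hsingle]; exact hinv τ _ (definableSubset_fixator b)
      have hdecomp : (QuotientGroup.mk ⁻¹' ((insert c F : Finset _) : Set (autFix L M A ⧸ H)))
          = (QuotientGroup.mk ⁻¹' ({c} : Set (autFix L M A ⧸ H)))
            ∪ (QuotientGroup.mk ⁻¹' (F : Set (autFix L M A ⧸ H))) := by
        rw [Finset.coe_insert, Set.insert_eq, Set.preimage_union]
      have hdisj : Disjoint (QuotientGroup.mk ⁻¹' ({c} : Set (autFix L M A ⧸ H)))
          (QuotientGroup.mk ⁻¹' (F : Set (autFix L M A ⧸ H))) := by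
        rw [Set.disjoint_left]
        rintro σ h1 h2
        have h1' : (QuotientGroup.mk σ : autFix L M A ⧸ H) = c := h1
        have h2' : (QuotientGroup.mk σ : autFix L M A ⧸ H) ∈ F := h2
        rw [h1'] at h2'
        exact hc h2'
      constructor
      · rw [hdecomp]; exact definableSubset_union hdefC ih.1
      · rw [hdecomp, hadd _ _ hdefC ih.1 hdisj, hνC, ih.2, Finset.card_insert_of_notMem hc]
        push_cast; ring
  have hXfin : (QuotientGroup.mk '' Xs : Set (autFix L M A ⧸ H)).Finite := Set.toFinite _
  have hXeq : Xs = QuotientGroup.mk ⁻¹' ((hXfin.toFinset : Finset (autFix L M A ⧸ H)) :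
      Set (autFix L M A ⧸ H)) := by
    rw [Set.Finite.coe_toFinset]
    exact sat_preimage_eq hsat
  have hidx : H.index ≠ 0 := hHfi.index_ne_zero
  have hidx' : ((H.index : ℕ) : ℝ) ≠ 0 := Nat.cast_ne_zero.mpr hidx
  have huniv : (Set.univ : Set (autFix L M A)) = QuotientGroup.mk ⁻¹'
      ((Finset.univ : Finset (autFix L M A ⧸ H)) : Set (autFix L M A ⧸ H)) := by
    simp
  have hcardU : ((Finset.univ : Finset (autFix L M A ⧸ H)).card : ℝ) = ((H.index : ℕ) : ℝ) := by
    rw [Finset.card_univ, Subgroup.index_eq_card, Nat.card_eq_fintype_card]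
  have h1 : ((H.index : ℕ) : ℝ) * ν (H : Set (autFix L M A)) = 1 := by
    have h2 := (key Finset.univ).2
    rw [← huniv, hu] at h2
    rw [← hcardU]
    linarith
  have hνH : ν (H : Set (autFix L M A)) = 1 / ((H.index : ℕ) : ℝ) := by
    field_simp
    linarith
  have h2 := (key hXfin.toFinset).2
  rw [← hXeq] at h2
  have hcard2 : ((hXfin.toFinset.card : ℕ) : ℝ)
      = (((QuotientGroup.mk '' Xs : Set (autFix L M A ⧸ H)).ncard : ℕ) : ℝ) := by
    rw [Set.ncard_eq_toFinset_card _ hXfin]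
  rw [h2, hνH, dens_eq hHfi hsat, relDens, hcard2, mul_one_div]

end Main

variable {L : FirstOrder.Language.{u, v}} {M : Type w} [L.Structure M]

/-- If `M = acl(A)` then there is exactly one invariant Keisler measure `μ` on `Aut(M/A)`,
and `μ(Fix(b̄)) = 1/n` where `n` is the index of the fixator `Fix(b̄)` in `Aut(M/A)`. -/
theorem statement9 (A : Set M) (hacl : IsAclOver (L := L) A) :
    ∃ μ : Set (autFix L M A) → ℝ, IsInvariantKeislerMeasure A μ ∧
      (∀ ν : Set (autFix L M A) → ℝ, IsInvariantKeislerMeasure A ν →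
        ∀ X : Set (autFix L M A), IsDefinableSubset A X → ν X = μ X) ∧
      ∀ (n : ℕ) (b : Fin n → M),
        μ ((fixator (L := L) A b : Subgroup (autFix L M A)) : Set (autFix L M A)) =
          1 / ((fixator (L := L) A b).index : ℝ) := by
  classical
  refine ⟨dens, ⟨?_, ?_, ?_, ?_⟩, ?_, ?_⟩
  · rintro X ⟨n, φ, b, rfl⟩
    exact ⟨dens_nonneg (fixator_finiteIndex hacl b) (satBy_fixator φ b),
      dens_le_one (fixator_finiteIndex hacl b) (satBy_fixator φ b)⟩
  · exact dens_univ
  · rintro X Y ⟨n1, φ1, b1, rfl⟩ ⟨n2, φ2, b2, rfl⟩ hd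
    exact dens_union (fixator_finiteIndex hacl b1) (fixator_finiteIndex hacl b2)
      (satBy_fixator φ1 b1) (satBy_fixator φ2 b2) hd
  · rintro τ X ⟨n, φ, b, rfl⟩
    exact dens_smul τ (fixator_finiteIndex hacl b) (satBy_fixator φ b)
  · intro ν hν X hX
    exact nu_eq_dens hacl hν hX
  · intro n b
    exact dens_subgroup (fixator_finiteIndex hacl b)
end

section
/- Let M be atomic and strongly ω-homogeneous over A, let m̄ be an enumeration of M with p₀ = tp(m̄/A), and let N be an elementary extension of M. Suppose μ is a Keisler measure over N, in variables indexed by the enumeration m̄, which extends p₀ and is Aut-type-invariant over A (i.e., μ(φ(x̄, c̄)) = μ(φ(x̄, c̄′)) whenever φ(x̄, ȳ) is an L-formula with parameters from A and c̄, c̄′ are finite tuples from N satisfying the same L-formulas with parameters from A). Then there exists an invariant Keisler measure on Aut(M/A); in other words, Aut(M/A) is definably amenable. -/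
open FirstOrder FirstOrder.Language

universe u v w

/-- The solution set in `N` of a formula `φ` in variables indexed by `α` together with `k`
parameter slots, at a tuple of parameters `c` from `N`. -/
def solSet {L' : FirstOrder.Language} {α : Type*} {N : Type*} [L'.Structure N] {k : ℕ}
    (φ : L'.Formula (α ⊕ Fin k)) (c : Fin k → N) : Set (α → N) :=
  {v | φ.Realize (Sum.elim v c)}

variable {L : FirstOrder.Language.{u, v}} {M : Type w} [L.Structure M]

section Aux

variable {L : FirstOrder.Language.{u, v}} {M : Type w} [L.Structure M] {A : Set M}

/-- Upgrade an `L`-automorphism fixing `A` pointwise to an `L[[A]]`-automorphism. -/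
def myEquivWithConstants (e : M ≃[L] M) (h : ∀ a ∈ A, e a = a) : M ≃[L[[A]]] M where
  toEquiv := e.toEquiv
  map_fun' := fun {n} f x => by
    match n, f with
    | n, Sum.inl f => exact e.map_fun' f x
    | 0, Sum.inr c => exact h c c.2
    | (n+1), Sum.inr c => exact isEmptyElim c
  map_rel' := fun {n} r x => by
    match r with
    | Sum.inl r => exact e.map_rel' r x
    | Sum.inr r => exact isEmptyElim r

/-- Elements of `Aut(M/A)` preserve `L[[A]]`-formulas. -/
lemma autFix_realize_s10 {σ : Equiv.Perm M} (he : ∃ e : M ≃[L] M, ⇑e = ⇑σ)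
    (hfix : ∀ a ∈ A, σ a = a) {ι : Type*} (ρ : (L[[A]]).Formula ι) (x : ι → M) :
    ρ.Realize (fun i => σ (x i)) ↔ ρ.Realize x := by
  obtain ⟨e, he⟩ := he
  have h' : ∀ a ∈ A, e a = a := by intro a ha; rw [show ⇑e = ⇑σ from he]; exact hfix a ha
  have h2 := StrongHomClass.realize_formula (myEquivWithConstants e h') (φ := ρ) (v := x)
  rw [← h2]
  have h3 : ⇑(myEquivWithConstants e h') = ⇑σ := he
  rw [h3]; rfl

lemma elim_comp_summap {T : Type*} {α β α' β' : Type*} (u : α' → T) (w : β' → T)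
    (f : α → α') (k : β → β') :
    (Sum.elim u w ∘ Sum.map f k : α ⊕ β → T) = Sum.elim (fun i => u (f i)) (fun i => w (k i)) := by
  funext a; cases a <;> rfl

/-- Key transfer lemma: a property `δ` that holds of all pairs `(σ(d̄), d̄)` for
`σ ∈ Aut(M/A)` transfers, by homogeneity, atomicity and elementarity, to all pairs
`(v(d̄), g(d̄))` in `N` where `v(d̄)` realizes the isolating formula of `tp(d̄/A)`. -/
lemma transfer_lemma (hhom : StronglyOmegaHomOver (L := L) A)
    {N : Type w} [(L[[A]]).Structure N] (g : M ↪ₑ[L[[A]]] N)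
    {k : ℕ} (d : Fin k → M) (θ : (L[[A]]).Formula (Fin k))
    (hθd : θ.Realize d)
    (hiso : ∀ χ : (L[[A]]).Formula (Fin k), χ.Realize d →
      ∀ a : Fin k → M, θ.Realize a → χ.Realize a)
    (δ : (L[[A]]).Formula (Fin k ⊕ Fin k))
    (hδ : ∀ σ ∈ autFix L M A, δ.Realize (Sum.elim (fun i => σ (d i)) d))
    (v : M → N) (hv : θ.Realize (fun i => v (d i))) :
    δ.Realize (Sum.elim (fun i => v (d i)) (fun i => g (d i))) := by
  classical
  set Ξ : (L[[A]]).Formula (Fin k) :=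
    (((θ.relabel Sum.inl).imp δ).relabel (Sum.elim Sum.inr Sum.inl)).iAlls (Fin k) with hΞ
  have hM : Ξ.Realize d := by
    rw [hΞ, Formula.realize_iAlls]
    intro w
    rw [Formula.realize_relabel, Function.comp_def]
    have harg : (fun a => Sum.elim d w (Sum.elim Sum.inr Sum.inl a) : Fin k ⊕ Fin k → M)
        = Sum.elim w d := by funext a; cases a <;> rfl
    rw [harg, Formula.realize_imp, Formula.realize_relabel]
    intro hw
    have hw' : θ.Realize w := hw
    have hsame : ∀ χ : (L[[A]]).Formula (Fin k), χ.Realize d ↔ χ.Realize w := by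
      intro χ
      constructor
      · intro h; exact hiso χ h w hw'
      · intro h; by_contra hd
        exact (Formula.realize_not.1 (hiso χ.not (Formula.realize_not.2 hd) w hw')) h
    obtain ⟨σ, hσm, hσ⟩ := hhom k d w hsame
    have hδ' := hδ σ hσm
    have hfn : (Sum.elim (fun i => σ (d i)) d) = Sum.elim w d := by
      funext a; cases a with
      | inl i => simp [hσ i]
      | inr i => rfl
    rwa [hfn] at hδ'
  have hN : Ξ.Realize (fun i => g (d i)) := (g.map_formula Ξ d).2 hM
  rw [hΞ, Formula.realize_iAlls] at hN
  have hN' := hN (fun i => v (d i))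
  rw [Formula.realize_relabel, Function.comp_def] at hN'
  have harg : (fun a => Sum.elim (fun i => g (d i)) (fun i => v (d i))
      (Sum.elim Sum.inr Sum.inl a) : Fin k ⊕ Fin k → N)
      = Sum.elim (fun i => v (d i)) (fun i => g (d i)) := by
    funext a; cases a <;> rfl
  rw [harg, Formula.realize_imp, Formula.realize_relabel] at hN'
  exact hN' hv

end Aux

/-- Let `M` be atomic and strongly `ω`-homogeneous over `A`, with `p₀` the type over `A` of an
enumeration `m̄` of `M` (we take `m̄ = id`, so variables are indexed by `M` itself), and let
`N` be an elementary extension of `M`.  If there is a Keisler measure `μ` over `N` in variables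
`m̄` which extends `p₀` and is invariant under replacing parameter tuples by tuples with the
same type over `A`, then `Aut(M/A)` is definably amenable: it carries an invariant Keisler
measure. -/
theorem statement10 (A : Set M) (hat : AtomicOver (L := L) A) (hhom : StronglyOmegaHomOver (L := L) A)
    (N : Type w) [(L[[A]]).Structure N] (g : M ↪ₑ[L[[A]]] N)
    (μ : ∀ k : ℕ, (L[[A]]).Formula (M ⊕ Fin k) → (Fin k → N) → ℝ)
    -- formulas with the same solution set in `N` get the same measure
    (hcongr : ∀ (k l : ℕ) (φ : (L[[A]]).Formula (M ⊕ Fin k))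
      (ψ : (L[[A]]).Formula (M ⊕ Fin l)) (c : Fin k → N) (d : Fin l → N),
      solSet φ c = solSet ψ d → μ k φ c = μ l ψ d)
    -- nonnegativity
    (hpos : ∀ (k : ℕ) (φ : (L[[A]]).Formula (M ⊕ Fin k)) (c : Fin k → N), 0 ≤ μ k φ c)
    -- valid formulas get measure `1`
    (hone : ∀ (k : ℕ) (φ : (L[[A]]).Formula (M ⊕ Fin k)) (c : Fin k → N),
      solSet φ c = Set.univ → μ k φ c = 1)
    -- finite additivity for inconsistent pairs
    (hadd : ∀ (k l m : ℕ) (φ : (L[[A]]).Formula (M ⊕ Fin k))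
      (ψ : (L[[A]]).Formula (M ⊕ Fin l)) (χ : (L[[A]]).Formula (M ⊕ Fin m))
      (c : Fin k → N) (d : Fin l → N) (e : Fin m → N),
      solSet φ c ∩ solSet ψ d = ∅ → solSet χ e = solSet φ c ∪ solSet ψ d →
      μ m χ e = μ k φ c + μ l ψ d)
    -- `μ` extends `p₀ = tp(m̄/A)`
    (hp0 : ∀ φ : (L[[A]]).Formula (M ⊕ Fin 0),
      φ.Realize (Sum.elim (id : M → M) finZeroElim) → μ 0 φ finZeroElim = 1)
    -- `μ` is invariant under type-preserving changes of parameters (`Aut`-type-invariance)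
    (hinv : ∀ (k : ℕ) (φ : (L[[A]]).Formula (M ⊕ Fin k)) (c c' : Fin k → N),
      (∀ ρ : (L[[A]]).Formula (Fin k), ρ.Realize c ↔ ρ.Realize c') →
      μ k φ c = μ k φ c') :
    ∃ ν : Set (autFix L M A) → ℝ, IsInvariantKeislerMeasure A ν := by
  classical
  -- notation: the "shifted" formula of a presentation
  have compshift : ∀ (n : ℕ) (φ : (L[[A]]).Formula (Fin n ⊕ Fin n)) (b : Fin n → M)
      (v : M → N) (c : Fin n → N),
      ((φ.relabel (Sum.map b id)).Realize (Sum.elim v c) ↔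
        φ.Realize (Sum.elim (fun i => v (b i)) c)) := by
    intro n φ b v c
    rw [Formula.realize_relabel, elim_comp_summap]
    exact Iff.rfl
  -- monotonicity of μ
  have monoμ : ∀ (k l : ℕ) (φ : (L[[A]]).Formula (M ⊕ Fin k)) (ψ : (L[[A]]).Formula (M ⊕ Fin l))
      (c : Fin k → N) (d : Fin l → N), solSet φ c ⊆ solSet ψ d → μ k φ c ≤ μ l ψ d := by
    intro k l φ ψ c d hsub
    set φ' : (L[[A]]).Formula (M ⊕ Fin (k + l)) := φ.relabel (Sum.map id (Fin.castAdd l)) with hφ'def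
    set ψ' : (L[[A]]).Formula (M ⊕ Fin (k + l)) := ψ.relabel (Sum.map id (Fin.natAdd k)) with hψ'def
    set e : Fin (k + l) → N := Fin.append c d with hedef
    have hφ' : solSet φ' e = solSet φ c := by
      ext v
      simp only [solSet, Set.mem_setOf_eq, hφ'def, Formula.realize_relabel, elim_comp_summap]
      have harg : (Sum.elim (fun i => v (id i)) (fun i => e (Fin.castAdd l i)) : M ⊕ Fin k → N)
          = Sum.elim v c := by
        funext a
        cases a with
        | inl i => rfl
        | inr i => show e (Fin.castAdd l i) = c i; rw [hedef]; exact Fin.append_left c d i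
      rw [harg]
    have hψ' : solSet ψ' e = solSet ψ d := by
      ext v
      simp only [solSet, Set.mem_setOf_eq, hψ'def, Formula.realize_relabel, elim_comp_summap]
      have harg : (Sum.elim (fun i => v (id i)) (fun i => e (Fin.natAdd k i)) : M ⊕ Fin l → N)
          = Sum.elim v d := by
        funext a
        cases a with
        | inl i => rfl
        | inr i => show e (Fin.natAdd k i) = d i; rw [hedef]; exact Fin.append_right c d i
      rw [harg]
    have hdisj : solSet φ' e ∩ solSet (ψ' ⊓ φ'.not) e = ∅ := by
      rw [Set.eq_empty_iff_forall_notMem]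
      rintro v ⟨h1, h2⟩
      exact (Formula.realize_not.1 (Formula.realize_inf.1 h2).2) h1
    have hun : solSet ψ' e = solSet φ' e ∪ solSet (ψ' ⊓ φ'.not) e := by
      ext v
      simp only [solSet, Set.mem_setOf_eq, Set.mem_union, Formula.realize_inf,
        Formula.realize_not]
      constructor
      · intro h
        by_cases hc : φ'.Realize (Sum.elim v e)
        · exact Or.inl hc
        · exact Or.inr ⟨h, hc⟩
      · rintro (h | ⟨h, _⟩)
        · have h1 : v ∈ solSet φ c := by rw [← hφ']; exact h
          have h2 := hsub h1
          rw [← hψ'] at h2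
          exact h2
        · exact h
    have hsum := hadd (k + l) (k + l) (k + l) φ' (ψ' ⊓ φ'.not) ψ' e e e hdisj hun
    have e1 : μ (k + l) φ' e = μ k φ c := hcongr _ _ _ _ _ _ hφ'
    have e2 : μ (k + l) ψ' e = μ l ψ d := hcongr _ _ _ _ _ _ hψ'
    have e3 := hpos (k + l) (ψ' ⊓ φ'.not) e
    linarith
  -- complements
  have hcompl : ∀ (k : ℕ) (φ : (L[[A]]).Formula (M ⊕ Fin k)) (c : Fin k → N),
      μ k φ c + μ k φ.not c = 1 := by
    intro k φ c
    have h1 : μ k (φ ⊔ φ.not) c = 1 := by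
      apply hone
      rw [Set.eq_univ_iff_forall]
      intro v
      simp only [solSet, Set.mem_setOf_eq, Formula.realize_sup, Formula.realize_not]
      exact em _
    have h2 := hadd k k k φ φ.not (φ ⊔ φ.not) c c c
      (by rw [Set.eq_empty_iff_forall_notMem]; rintro v ⟨hh1, hh2⟩
          exact (Formula.realize_not.1 hh2) hh1)
      (by ext v; simp only [solSet, Set.mem_setOf_eq, Set.mem_union, Formula.realize_sup])
    linarith
  -- conjoining with the (measure-one) isolating formula of a tuple from M
  have hconj : ∀ (k kd : ℕ) (dd : Fin kd → M) (θ : (L[[A]]).Formula (Fin kd)),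
      θ.Realize dd → ∀ (φ : (L[[A]]).Formula (M ⊕ Fin k)) (c : Fin k → N),
      μ k (φ ⊓ θ.relabel (fun i => Sum.inl (dd i))) c = μ k φ c := by
    intro k kd dd θ hθd φ c
    set Θk : (L[[A]]).Formula (M ⊕ Fin k) := θ.relabel (fun i => Sum.inl (dd i)) with hΘk
    set Θ0 : (L[[A]]).Formula (M ⊕ Fin 0) := θ.relabel (fun i => Sum.inl (dd i)) with hΘ0
    have hone0 : μ 0 Θ0 finZeroElim = 1 := by
      apply hp0
      rw [hΘ0, Formula.realize_relabel]
      exact hθd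
    have hzero : μ 0 Θ0.not finZeroElim = 0 := by
      have := hcompl 0 Θ0 finZeroElim; linarith
    have hle : μ k (φ ⊓ Θk.not) c ≤ μ 0 Θ0.not finZeroElim := by
      apply monoμ
      intro v hv
      simp only [solSet, Set.mem_setOf_eq, Formula.realize_inf, Formula.realize_not, hΘk,
        Formula.realize_relabel] at hv
      simp only [solSet, Set.mem_setOf_eq, Formula.realize_not, hΘ0, Formula.realize_relabel]
      exact hv.2
    have hge := hpos k (φ ⊓ Θk.not) c
    have hsplit := hadd k k k (φ ⊓ Θk) (φ ⊓ Θk.not) φ c c c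
      (by rw [Set.eq_empty_iff_forall_notMem]; rintro v ⟨hh1, hh2⟩
          exact (Formula.realize_not.1 (Formula.realize_inf.1 hh2).2)
            (Formula.realize_inf.1 hh1).2)
      (by ext v
          simp only [solSet, Set.mem_setOf_eq, Set.mem_union, Formula.realize_inf,
            Formula.realize_not]
          constructor
          · intro h
            by_cases hc : Θk.Realize (Sum.elim v c)
            · exact Or.inl ⟨h, hc⟩
            · exact Or.inr ⟨h, hc⟩
          · rintro (⟨h, _⟩ | ⟨h, _⟩) <;> exact h)
    linarith
  -- well-definedness: two presentations of the same definable set get equal measure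
  have key : ∀ (n : ℕ) (φ : (L[[A]]).Formula (Fin n ⊕ Fin n)) (b : Fin n → M)
      (m : ℕ) (ψ : (L[[A]]).Formula (Fin m ⊕ Fin m)) (c : Fin m → M),
      {σ : autFix L M A | φ.Realize (Sum.elim (fun i => σ.1 (b i)) b)} =
        {σ : autFix L M A | ψ.Realize (Sum.elim (fun i => σ.1 (c i)) c)} →
      μ n (φ.relabel (Sum.map b id)) (fun i => g (b i)) =
        μ m (ψ.relabel (Sum.map c id)) (fun i => g (c i)) := by
    intro n φ b m ψ c hXY
    set d : Fin (n + m) → M := Fin.append b c with hd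
    obtain ⟨θ, hθd, hiso⟩ := hat (n + m) d
    have hdb : ∀ i, d (Fin.castAdd m i) = b i := fun i => Fin.append_left b c i
    have hdc : ∀ i, d (Fin.natAdd n i) = c i := fun i => Fin.append_right b c i
    set φe : (L[[A]]).Formula (Fin (n + m) ⊕ Fin (n + m)) :=
      φ.relabel (Sum.map (Fin.castAdd m) (Fin.castAdd m)) with hφe
    set ψe : (L[[A]]).Formula (Fin (n + m) ⊕ Fin (n + m)) :=
      ψ.relabel (Sum.map (Fin.natAdd n) (Fin.natAdd n)) with hψe
    have hδ : ∀ σ ∈ autFix L M A, (φe.iff ψe).Realize (Sum.elim (fun i => σ (d i)) d) := by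
      intro σ hσ
      rw [Formula.realize_iff, hφe, hψe, Formula.realize_relabel, Formula.realize_relabel,
        elim_comp_summap, elim_comp_summap]
      have h1 : (Sum.elim (fun i => σ (d (Fin.castAdd m i))) (fun i => d (Fin.castAdd m i))
          : Fin n ⊕ Fin n → M) = Sum.elim (fun i => σ (b i)) b := by
        funext a; cases a with
        | inl i => show σ (d (Fin.castAdd m i)) = σ (b i); rw [hdb]
        | inr i => exact hdb i
      have h2 : (Sum.elim (fun i => σ (d (Fin.natAdd n i))) (fun i => d (Fin.natAdd n i))
          : Fin m ⊕ Fin m → M) = Sum.elim (fun i => σ (c i)) c := by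
        funext a; cases a with
        | inl i => show σ (d (Fin.natAdd n i)) = σ (c i); rw [hdc]
        | inr i => exact hdc i
      rw [h1, h2]
      exact Set.ext_iff.1 hXY ⟨σ, hσ⟩
    have main : ∀ v : M → N, θ.Realize (fun i => v (d i)) →
        (φ.Realize (Sum.elim (fun i => v (b i)) (fun i => g (b i))) ↔
          ψ.Realize (Sum.elim (fun i => v (c i)) (fun i => g (c i)))) := by
      intro v hv
      have ht := transfer_lemma hhom g d θ hθd hiso (φe.iff ψe) hδ v hv
      rw [Formula.realize_iff, hφe, hψe, Formula.realize_relabel, Formula.realize_relabel,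
        elim_comp_summap, elim_comp_summap] at ht
      have h1 : (Sum.elim (fun i => v (d (Fin.castAdd m i))) (fun i => g (d (Fin.castAdd m i)))
          : Fin n ⊕ Fin n → N) = Sum.elim (fun i => v (b i)) (fun i => g (b i)) := by
        funext a; cases a with
        | inl i => show v (d (Fin.castAdd m i)) = v (b i); rw [hdb]
        | inr i => show g (d (Fin.castAdd m i)) = g (b i); rw [hdb]
      have h2 : (Sum.elim (fun i => v (d (Fin.natAdd n i))) (fun i => g (d (Fin.natAdd n i)))
          : Fin m ⊕ Fin m → N) = Sum.elim (fun i => v (c i)) (fun i => g (c i)) := by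
        funext a; cases a with
        | inl i => show v (d (Fin.natAdd n i)) = v (c i); rw [hdc]
        | inr i => show g (d (Fin.natAdd n i)) = g (c i); rw [hdc]
      rwa [h1, h2] at ht
    calc μ n (φ.relabel (Sum.map b id)) (fun i => g (b i))
        = μ n (φ.relabel (Sum.map b id) ⊓ θ.relabel (fun i => Sum.inl (d i)))
            (fun i => g (b i)) := (hconj n (n + m) d θ hθd _ _).symm
      _ = μ m (ψ.relabel (Sum.map c id) ⊓ θ.relabel (fun i => Sum.inl (d i)))
            (fun i => g (c i)) := by
          apply hcongr
          ext v
          simp only [solSet, Set.mem_setOf_eq, Formula.realize_inf, Formula.realize_relabel,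
            compshift]
          constructor
          · rintro ⟨hh1, hh2⟩
            exact ⟨(main v hh2).1 hh1, hh2⟩
          · rintro ⟨hh1, hh2⟩
            exact ⟨(main v hh2).2 hh1, hh2⟩
      _ = μ m (ψ.relabel (Sum.map c id)) (fun i => g (c i)) := hconj m (n + m) d θ hθd _ _
  -- the invariant Keisler measure
  let ν : Set (autFix L M A) → ℝ := fun X =>
    if h : IsDefinableSubset A X then
      μ h.choose ((h.choose_spec.choose).relabel
          (Sum.map (h.choose_spec.choose_spec.choose) id))
        (fun i => g (h.choose_spec.choose_spec.choose i))
    else 0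
  have νval : ∀ (X : Set (autFix L M A)) (n : ℕ) (φ : (L[[A]]).Formula (Fin n ⊕ Fin n))
      (b : Fin n → M),
      X = {σ : autFix L M A | φ.Realize (Sum.elim (fun i => σ.1 (b i)) b)} →
      ν X = μ n (φ.relabel (Sum.map b id)) (fun i => g (b i)) := by
    intro X n φ b hX
    have hdef : IsDefinableSubset A X := ⟨n, φ, b, hX⟩
    show (if h : IsDefinableSubset A X then _ else 0) = _
    rw [dif_pos hdef]
    exact key _ _ _ _ _ _ (hdef.choose_spec.choose_spec.choose_spec.symm.trans hX)
  have hμtop : μ 0 (⊤ : (L[[A]]).Formula (M ⊕ Fin 0)) finZeroElim = 1 := by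
    apply hone
    rw [Set.eq_univ_iff_forall]
    intro v
    simp only [solSet, Set.mem_setOf_eq, Formula.realize_top]
  refine ⟨ν, ?_, ?_, ?_, ?_⟩
  · -- bounds
    rintro X ⟨n, φ, b, hb⟩
    rw [νval X n φ b hb]
    refine ⟨hpos _ _ _, ?_⟩
    have hle : μ n (φ.relabel (Sum.map b id)) (fun i => g (b i)) ≤
        μ 0 (⊤ : (L[[A]]).Formula (M ⊕ Fin 0)) finZeroElim := by
      apply monoμ
      intro v _
      simp only [solSet, Set.mem_setOf_eq, Formula.realize_top]
    linarith
  · -- total mass one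
    have huniv : (Set.univ : Set (autFix L M A)) =
        {σ : autFix L M A | (⊤ : (L[[A]]).Formula (Fin 0 ⊕ Fin 0)).Realize
          (Sum.elim (fun i => σ.1 ((finZeroElim : Fin 0 → M) i)) (finZeroElim : Fin 0 → M))} := by
      ext σ
      simp only [Set.mem_univ, Set.mem_setOf_eq, Formula.realize_top]
    rw [νval _ 0 ⊤ (finZeroElim : Fin 0 → M) huniv]
    apply hone
    rw [Set.eq_univ_iff_forall]
    intro v
    simp only [solSet, Set.mem_setOf_eq, Formula.realize_relabel, Formula.realize_top]
  · -- additivity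
    rintro X Y ⟨n, φ, b, hb⟩ ⟨m, ψ, c, hc⟩ hdisjXY
    set d : Fin (n + m) → M := Fin.append b c with hd
    obtain ⟨θ, hθd, hiso⟩ := hat (n + m) d
    have hdb : ∀ i, d (Fin.castAdd m i) = b i := fun i => Fin.append_left b c i
    have hdc : ∀ i, d (Fin.natAdd n i) = c i := fun i => Fin.append_right b c i
    set φe : (L[[A]]).Formula (Fin (n + m) ⊕ Fin (n + m)) :=
      φ.relabel (Sum.map (Fin.castAdd m) (Fin.castAdd m)) with hφe
    set ψe : (L[[A]]).Formula (Fin (n + m) ⊕ Fin (n + m)) :=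
      ψ.relabel (Sum.map (Fin.natAdd n) (Fin.natAdd n)) with hψe
    -- realization computations for φe, ψe at tuples built from d
    have hφeR : ∀ (u : Fin (n + m) → M) (w : Fin (n + m) → M),
        φe.Realize (Sum.elim u w) ↔
          φ.Realize (Sum.elim (fun i => u (Fin.castAdd m i)) (fun i => w (Fin.castAdd m i))) := by
      intro u w
      rw [hφe, Formula.realize_relabel, elim_comp_summap]
    have hψeR : ∀ (u : Fin (n + m) → M) (w : Fin (n + m) → M),
        ψe.Realize (Sum.elim u w) ↔
          ψ.Realize (Sum.elim (fun i => u (Fin.natAdd n i)) (fun i => w (Fin.natAdd n i))) := by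
      intro u w
      rw [hψe, Formula.realize_relabel, elim_comp_summap]
    have hsd : ∀ σ : Equiv.Perm M,
        (Sum.elim (fun i => σ (d (Fin.castAdd m i))) (fun i => d (Fin.castAdd m i))
          : Fin n ⊕ Fin n → M) = Sum.elim (fun i => σ (b i)) b := by
      intro σ; funext a; cases a with
      | inl i => show σ (d (Fin.castAdd m i)) = σ (b i); rw [hdb]
      | inr i => exact hdb i
    have hsd' : ∀ σ : Equiv.Perm M,
        (Sum.elim (fun i => σ (d (Fin.natAdd n i))) (fun i => d (Fin.natAdd n i))
          : Fin m ⊕ Fin m → M) = Sum.elim (fun i => σ (c i)) c := by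
      intro σ; funext a; cases a with
      | inl i => show σ (d (Fin.natAdd n i)) = σ (c i); rw [hdc]
      | inr i => exact hdc i
    have hXY : X ∪ Y = {σ : autFix L M A | (φe ⊔ ψe).Realize (Sum.elim (fun i => σ.1 (d i)) d)} := by
      ext σ
      simp only [Set.mem_union, hb, hc, Set.mem_setOf_eq, Formula.realize_sup]
      rw [hφeR, hψeR, hsd σ.1, hsd' σ.1]
    -- disjointness transfers
    have hδ : ∀ σ ∈ autFix L M A, ((φe ⊓ ψe).not).Realize (Sum.elim (fun i => σ (d i)) d) := by
      intro σ hσ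
      rw [Formula.realize_not, Formula.realize_inf, hφeR, hψeR, hsd σ, hsd' σ]
      rintro ⟨h1, h2⟩
      have hmem1 : (⟨σ, hσ⟩ : autFix L M A) ∈ X := by rw [hb]; exact h1
      have hmem2 : (⟨σ, hσ⟩ : autFix L M A) ∈ Y := by rw [hc]; exact h2
      exact Set.disjoint_left.1 hdisjXY hmem1 hmem2
    have maind : ∀ v : M → N, θ.Realize (fun i => v (d i)) →
        ¬(φ.Realize (Sum.elim (fun i => v (b i)) (fun i => g (b i))) ∧
          ψ.Realize (Sum.elim (fun i => v (c i)) (fun i => g (c i)))) := by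
      intro v hv
      have ht := transfer_lemma hhom g d θ hθd hiso ((φe ⊓ ψe).not) hδ v hv
      rw [Formula.realize_not, Formula.realize_inf, hφe, hψe, Formula.realize_relabel,
        Formula.realize_relabel, elim_comp_summap, elim_comp_summap] at ht
      have h1 : (Sum.elim (fun i => v (d (Fin.castAdd m i))) (fun i => g (d (Fin.castAdd m i)))
          : Fin n ⊕ Fin n → N) = Sum.elim (fun i => v (b i)) (fun i => g (b i)) := by
        funext a; cases a with
        | inl i => show v (d (Fin.castAdd m i)) = v (b i); rw [hdb]
        | inr i => show g (d (Fin.castAdd m i)) = g (b i); rw [hdb]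
      have h2 : (Sum.elim (fun i => v (d (Fin.natAdd n i))) (fun i => g (d (Fin.natAdd n i)))
          : Fin m ⊕ Fin m → N) = Sum.elim (fun i => v (c i)) (fun i => g (c i)) := by
        funext a; cases a with
        | inl i => show v (d (Fin.natAdd n i)) = v (c i); rw [hdc]
        | inr i => show g (d (Fin.natAdd n i)) = g (c i); rw [hdc]
      rwa [h1, h2] at ht
    -- solution sets in N
    set Θn : (L[[A]]).Formula (M ⊕ Fin n) := θ.relabel (fun i => Sum.inl (d i)) with hΘn
    set Θm : (L[[A]]).Formula (M ⊕ Fin m) := θ.relabel (fun i => Sum.inl (d i)) with hΘm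
    set Θnm : (L[[A]]).Formula (M ⊕ Fin (n + m)) := θ.relabel (fun i => Sum.inl (d i)) with hΘnm
    have hRΘ : ∀ (k : ℕ) (Θ : (L[[A]]).Formula (M ⊕ Fin k)) (hΘ : Θ = θ.relabel
        (fun i => Sum.inl (d i))) (v : M → N) (e : Fin k → N),
        Θ.Realize (Sum.elim v e) ↔ θ.Realize (fun i => v (d i)) := by
      intro k Θ hΘ v e
      rw [hΘ, Formula.realize_relabel]
      exact Iff.rfl
    have hχR : ∀ (v : M → N),
        ((φe ⊔ ψe).relabel (Sum.map d id)).Realize (Sum.elim v (fun i => g (d i))) ↔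
          (φ.Realize (Sum.elim (fun i => v (b i)) (fun i => g (b i))) ∨
            ψ.Realize (Sum.elim (fun i => v (c i)) (fun i => g (c i)))) := by
      intro v
      rw [compshift, Formula.realize_sup, hφe, hψe, Formula.realize_relabel,
        Formula.realize_relabel, elim_comp_summap, elim_comp_summap]
      have h1 : (Sum.elim (fun i => v (d (Fin.castAdd m i)))
          (fun i => (fun j => g (d j)) (Fin.castAdd m i)) : Fin n ⊕ Fin n → N)
          = Sum.elim (fun i => v (b i)) (fun i => g (b i)) := by
        funext a; cases a with
        | inl i => show v (d (Fin.castAdd m i)) = v (b i); rw [hdb]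
        | inr i => show g (d (Fin.castAdd m i)) = g (b i); rw [hdb]
      have h2 : (Sum.elim (fun i => v (d (Fin.natAdd n i)))
          (fun i => (fun j => g (d j)) (Fin.natAdd n i)) : Fin m ⊕ Fin m → N)
          = Sum.elim (fun i => v (c i)) (fun i => g (c i)) := by
        funext a; cases a with
        | inl i => show v (d (Fin.natAdd n i)) = v (c i); rw [hdc]
        | inr i => show g (d (Fin.natAdd n i)) = g (c i); rw [hdc]
      rw [h1, h2]
    have hdisjsol : solSet (φ.relabel (Sum.map b id) ⊓ Θn) (fun i => g (b i)) ∩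
        solSet (ψ.relabel (Sum.map c id) ⊓ Θm) (fun i => g (c i)) = ∅ := by
      rw [Set.eq_empty_iff_forall_notMem]
      rintro v ⟨h1, h2⟩
      simp only [solSet, Set.mem_setOf_eq, Formula.realize_inf] at h1 h2
      have hθv : θ.Realize (fun i => v (d i)) := (hRΘ n Θn hΘn v _).1 h1.2
      exact maind v hθv ⟨(compshift n φ b v _).1 h1.1, (compshift m ψ c v _).1 h2.1⟩
    have hunsol : solSet ((φe ⊔ ψe).relabel (Sum.map d id) ⊓ Θnm) (fun i => g (d i)) =
        solSet (φ.relabel (Sum.map b id) ⊓ Θn) (fun i => g (b i)) ∪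
          solSet (ψ.relabel (Sum.map c id) ⊓ Θm) (fun i => g (c i)) := by
      ext v
      simp only [solSet, Set.mem_setOf_eq, Set.mem_union, Formula.realize_inf]
      rw [hRΘ _ Θnm hΘnm, hRΘ _ Θn hΘn, hRΘ _ Θm hΘm, hχR, compshift, compshift]
      tauto
    have hsum' := hadd n m (n + m)
      (φ.relabel (Sum.map b id) ⊓ Θn) (ψ.relabel (Sum.map c id) ⊓ Θm)
      ((φe ⊔ ψe).relabel (Sum.map d id) ⊓ Θnm)
      (fun i => g (b i)) (fun i => g (c i)) (fun i => g (d i)) hdisjsol hunsol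
    rw [νval (X ∪ Y) (n + m) (φe ⊔ ψe) d hXY, νval X n φ b hb, νval Y m ψ c hc]
    rw [hΘnm] at hsum'
    rw [← hconj (n + m) (n + m) d θ hθd ((φe ⊔ ψe).relabel (Sum.map d id)) (fun i => g (d i)),
      hsum']
    rw [hΘn, hΘm, hconj n (n + m) d θ hθd, hconj m (n + m) d θ hθd]
  · -- invariance
    rintro τ X ⟨n, φ, b, hb⟩
    set b' : Fin (n + n) → M := Fin.append b (fun i => τ.1 (b i)) with hb'
    have hb'1 : ∀ i, b' (Fin.castAdd n i) = b i := fun i => Fin.append_left _ _ i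
    have hb'2 : ∀ i, b' (Fin.natAdd n i) = τ.1 (b i) := fun i => Fin.append_right _ _ i
    set φ₂ : (L[[A]]).Formula (Fin (n + n) ⊕ Fin (n + n)) :=
      φ.relabel (Sum.map (Fin.castAdd n) (Fin.natAdd n)) with hφ₂
    have hφ₂R : ∀ (ρ : Equiv.Perm M),
        φ₂.Realize (Sum.elim (fun i => ρ (b' i)) b') ↔
          φ.Realize (Sum.elim (fun i => ρ (b i)) (fun i => τ.1 (b i))) := by
      intro ρ
      rw [hφ₂, Formula.realize_relabel, elim_comp_summap]
      have h1 : (Sum.elim (fun i => ρ (b' (Fin.castAdd n i))) (fun i => b' (Fin.natAdd n i))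
          : Fin n ⊕ Fin n → M) = Sum.elim (fun i => ρ (b i)) (fun i => τ.1 (b i)) := by
        funext a; cases a with
        | inl i => show ρ (b' (Fin.castAdd n i)) = ρ (b i); rw [hb'1]
        | inr i => exact hb'2 i
      rw [h1]
    have himg : (fun σ => τ * σ) '' X =
        {ρ : autFix L M A | φ₂.Realize (Sum.elim (fun i => ρ.1 (b' i)) b')} := by
      ext ρ
      simp only [Set.mem_image, hb, Set.mem_setOf_eq]
      rw [hφ₂R ρ.1]
      constructor
      · rintro ⟨σ, hσ, rfl⟩
        have ht := (autFix_realize_s10 τ.2.1 τ.2.2 φ (Sum.elim (fun i => σ.1 (b i)) b)).2 hσ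
        have harg : (fun a => τ.1 (Sum.elim (fun i => σ.1 (b i)) b a) : Fin n ⊕ Fin n → M)
            = Sum.elim (fun i => (τ * σ).1 (b i)) (fun i => τ.1 (b i)) := by
          funext a; cases a <;> rfl
        rwa [harg] at ht
      · intro h
        refine ⟨τ⁻¹ * ρ, ?_, by group⟩
        have harg : (fun a => τ.1 (Sum.elim (fun i => (τ⁻¹ * ρ).1 (b i)) b a)
            : Fin n ⊕ Fin n → M) = Sum.elim (fun i => ρ.1 (b i)) (fun i => τ.1 (b i)) := by
          funext a; cases a with
          | inl i =>
            show τ.1 ((τ⁻¹ * ρ).1 (b i)) = ρ.1 (b i)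
            have : (τ⁻¹ * ρ).1 = τ.1⁻¹ * ρ.1 := rfl
            rw [this]
            simp
          | inr i => rfl
        have ht := (autFix_realize_s10 τ.2.1 τ.2.2 φ
          (Sum.elim (fun i => (τ⁻¹ * ρ).1 (b i)) b))
        rw [harg] at ht
        exact ht.1 h
    rw [νval _ (n + n) φ₂ b' himg, νval X n φ b hb]
    have hsol : solSet (φ₂.relabel (Sum.map b' id)) (fun i => g (b' i)) =
        solSet (φ.relabel (Sum.map b id)) (fun i => g (τ.1 (b i))) := by
      ext v
      simp only [solSet, Set.mem_setOf_eq]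
      rw [compshift, compshift, hφ₂, Formula.realize_relabel, elim_comp_summap]
      have h1 : (Sum.elim (fun i => v (b' (Fin.castAdd n i)))
          (fun i => (fun j => g (b' j)) (Fin.natAdd n i)) : Fin n ⊕ Fin n → N)
          = Sum.elim (fun i => v (b i)) (fun i => g (τ.1 (b i))) := by
        funext a; cases a with
        | inl i => show v (b' (Fin.castAdd n i)) = v (b i); rw [hb'1]
        | inr i => show g (b' (Fin.natAdd n i)) = g (τ.1 (b i)); rw [hb'2]
      rw [h1]
    rw [hcongr _ _ _ _ _ _ hsol]
    apply hinv
    intro ρf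
    have h1 := g.map_formula ρf (fun i => τ.1 (b i))
    have h2 := g.map_formula ρf b
    have h3 := autFix_realize_s10 τ.2.1 τ.2.2 ρf b
    have e1 : (⇑g ∘ fun i => τ.1 (b i)) = fun i => g (τ.1 (b i)) := rfl
    have e2 : (⇑g ∘ b) = fun i => g (b i) := rfl
    rw [e1] at h1
    rw [e2] at h2
    rw [h1, h2, h3]
end

section
/- Assume M is strongly ω-homogeneous over A. Let φ(x̄,ȳ) be an L-formula with parameters from A in two n-tuples of free variables and b̄ an n-tuple from M such that H = {σ ∈ Aut(M/A) : M ⊨ φ(σ(b̄), b̄)} is a subgroup of Aut(M/A), and let ψ(x̄) be an L-formula with parameters from A isolating tp(b̄/A). Then φ defines an equivalence relation on the set of realizations of ψ in M; that is: (reflexivity) M ⊨ ∀x̄(ψ(x̄) → φ(x̄,x̄)); (symmetry) M ⊨ ∀x̄∀ȳ(ψ(x̄) ∧ ψ(ȳ) ∧ φ(x̄,ȳ) → φ(ȳ,x̄)); (transitivity) M ⊨ ∀x̄∀ȳ∀z̄(ψ(x̄) ∧ ψ(ȳ) ∧ ψ(z̄) ∧ φ(x̄,ȳ) ∧ φ(ȳ,z̄)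 → φ(x̄,z̄)). -/
open FirstOrder FirstOrder.Language

universe u v w

section Defs

variable (L : FirstOrder.Language.{u, v}) (M : Type w) [L.Structure M]

variable {L M}

/-- `ψ` isolates the type of `b` over `A`: `ψ` is satisfied by `b`, and implies every formula
with parameters from `A` satisfied by `b`. -/
def Isolates (A : Set M) {n : ℕ} (ψ : (L[[A]]).Formula (Fin n)) (b : Fin n → M) : Prop :=
  ψ.Realize b ∧ ∀ χ : (L[[A]]).Formula (Fin n), χ.Realize b →
    ∀ a : Fin n → M, ψ.Realize a → χ.Realize a

end Defs

variable {L : FirstOrder.Language.{u, v}} {M : Type w} [L.Structure M]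

/-- An `L`-automorphism of `M` fixing `A` pointwise extends to an `L[[A]]`-automorphism. -/
def autFix.toEquivWithConstants {A : Set M} (e : M ≃[L] M) (he : ∀ a ∈ A, e a = a) :
    M ≃[L[[A]]] M where
  toEquiv := e.toEquiv
  map_fun' := by
    rintro m (f | c) x
    · exact e.map_fun' f x
    · match m, c with
      | 0, c => exact he c c.2
      | (k+1), c => exact isEmptyElim c
  map_rel' := by
    rintro m (R | R) x
    · exact e.map_rel' R x
    · exact isEmptyElim R

/-- Automorphisms over `A` preserve formulas with parameters in `A`. -/
theorem autFix.realize_formula {A : Set M} {σ : Equiv.Perm M} (hσ : σ ∈ autFix L M A)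
    {α : Type*} (φ : (L[[A]]).Formula α) (v : α → M) :
    φ.Realize (⇑σ ∘ v) ↔ φ.Realize v := by
  obtain ⟨⟨e, he⟩, hfix⟩ := hσ
  have hfix' : ∀ a ∈ A, e a = a := fun a ha => (congrFun he a).trans (hfix a ha)
  have hco : ⇑(autFix.toEquivWithConstants e hfix') = ⇑σ := he
  rw [← hco]
  exact StrongHomClass.realize_formula _ φ

/-- If `M` is strongly `ω`-homogeneous over `A`, `H = {σ : M ⊨ φ(σ(b̄), b̄)}` is a subgroup
of `Aut(M/A)`, and `ψ` isolates `tp(b̄/A)`, then `φ` defines an equivalence relation on the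
realizations of `ψ` in `M`. -/
theorem statement12 (A : Set M) (hhom : StronglyOmegaHomOver (L := L) A)
    (n : ℕ) (φ : (L[[A]]).Formula (Fin n ⊕ Fin n)) (b : Fin n → M)
    (ψ : (L[[A]]).Formula (Fin n)) (hiso : Isolates (L := L) A ψ b)
    (H : Set (autFix L M A))
    (hH : H = {σ : autFix L M A | φ.Realize (Sum.elim (fun i => σ.1 (b i)) b)})
    (h1 : (1 : autFix L M A) ∈ H)
    (hmul : ∀ σ τ : autFix L M A, σ ∈ H → τ ∈ H → σ * τ ∈ H)
    (hinv : ∀ σ : autFix L M A, σ ∈ H → σ⁻¹ ∈ H) :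
    (∀ a : Fin n → M, ψ.Realize a → φ.Realize (Sum.elim a a)) ∧
    (∀ a c : Fin n → M, ψ.Realize a → ψ.Realize c →
      φ.Realize (Sum.elim a c) → φ.Realize (Sum.elim c a)) ∧
    (∀ a c d : Fin n → M, ψ.Realize a → ψ.Realize c → ψ.Realize d →
      φ.Realize (Sum.elim a c) → φ.Realize (Sum.elim c d) → φ.Realize (Sum.elim a d)) := by
  subst hH
  -- every realization of ψ is a conjugate of b
  have key : ∀ a : Fin n → M, ψ.Realize a →
      ∃ σ : autFix L M A, ∀ i, σ.1 (b i) = a i := by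
    intro a ha
    have hsame : ∀ χ : (L[[A]]).Formula (Fin n), χ.Realize b ↔ χ.Realize a := by
      intro χ
      constructor
      · intro h; exact hiso.2 χ h a ha
      · intro h
        by_contra hnb
        have := hiso.2 χ.not (by rwa [Formula.realize_not]) a ha
        rw [Formula.realize_not] at this; exact this h
    obtain ⟨σ, hσ, hab⟩ := hhom n b a hsame
    exact ⟨⟨σ, hσ⟩, hab⟩
  -- membership in H rewritten
  have hmem : ∀ σ : autFix L M A, σ ∈
      {σ : autFix L M A | φ.Realize (Sum.elim (fun i => σ.1 (b i)) b)} ↔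
      φ.Realize (Sum.elim (fun i => σ.1 (b i)) b) := fun _ => Iff.rfl
  -- applying an automorphism to a pair
  have happ : ∀ (σ : autFix L M A) (u w : Fin n → M),
      φ.Realize (Sum.elim (fun i => σ.1 (u i)) (fun i => σ.1 (w i))) ↔
      φ.Realize (Sum.elim u w) := by
    intro σ u w
    have := autFix.realize_formula σ.2 φ (Sum.elim u w)
    rw [show ⇑σ.1 ∘ Sum.elim u w = Sum.elim (fun i => σ.1 (u i)) (fun i => σ.1 (w i)) from
      funext (by rintro (i | i) <;> rfl)] at this
    exact this
  -- characterize: for a c realizing ψ with σ(b)=a, τ(b)=c : φ(a,c) ↔ τ⁻¹σ ∈ H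
  have char : ∀ (σ τ : autFix L M A) (a c : Fin n → M),
      (∀ i, σ.1 (b i) = a i) → (∀ i, τ.1 (b i) = c i) →
      (φ.Realize (Sum.elim a c) ↔ φ.Realize (Sum.elim (fun i => (τ⁻¹ * σ).1 (b i)) b)) := by
    intro σ τ a c hσa hτc
    have := happ τ (fun i => (τ⁻¹ * σ).1 (b i)) b
    rw [show (fun i => τ.1 ((τ⁻¹ * σ).1 (b i))) = a from funext fun i => by
        simp only [Subgroup.coe_mul, InvMemClass.coe_inv, Equiv.Perm.mul_apply]
        rw [← Equiv.Perm.mul_apply, mul_inv_cancel, Equiv.Perm.one_apply]; exact hσa i,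
      show (fun i => τ.1 (b i)) = c from funext hτc] at this
    exact this
  refine ⟨?_, ?_, ?_⟩
  · intro a ha
    obtain ⟨σ, hσ⟩ := key a ha
    refine (char σ σ a a hσ hσ).mpr ?_
    rw [inv_mul_cancel]
    exact h1
  · intro a c ha hc hac
    obtain ⟨σ, hσ⟩ := key a ha
    obtain ⟨τ, hτ⟩ := key c hc
    have h1' : τ⁻¹ * σ ∈ {σ : autFix L M A | φ.Realize (Sum.elim (fun i => σ.1 (b i)) b)} :=
      (char σ τ a c hσ hτ).mp hac
    have h2' := hinv _ h1'
    rw [mul_inv_rev, inv_inv] at h2'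
    exact (char τ σ c a hτ hσ).mpr h2'
  · intro a c d ha hc hd hac hcd
    obtain ⟨σ, hσ⟩ := key a ha
    obtain ⟨τ, hτ⟩ := key c hc
    obtain ⟨ρ, hρ⟩ := key d hd
    have h1' := (char σ τ a c hσ hτ).mp hac
    have h2' := (char τ ρ c d hτ hρ).mp hcd
    have h3' := hmul _ _ h2' h1'
    rw [show ρ⁻¹ * τ * (τ⁻¹ * σ) = ρ⁻¹ * σ by group] at h3'
    exact (char σ ρ a d hσ hρ).mpr h3'
end

section
/- Assume M is atomic and strongly ω-homogeneous over A. Let X ⊆ Mᵏ be the set of realizations in M of an L-formula with parameters from A in k free variables, and let f : Aut(M/A) → X be a function. Then the following are equivalent: (i) the graph of f is definable, i.e., there exist a natural number n, an n-tuple b̄ from M, and an L-formula φ(x̄,ȳ,z̄) with parameters from A (with |x̄| = |ȳ| = n, |z̄| = k) such that for all σ ∈ Aut(M/A) and all c̄ ∈ X: f(σ) = c̄ if and only if M ⊨ φ(σ(b̄), b̄, c̄); (ii) there exist a natural number n, an n-tuple b̄ from M, and an L-formula θ(x̄,ȳ,z̄) with parameters from A defining a partial function (i.e., for all n-tuples ā,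 d̄ from M there is at most one k-tuple c̄ from M with M ⊨ θ(ā, d̄, c̄)) such that for all σ ∈ Aut(M/A), M ⊨ θ(σ(b̄), b̄, f(σ)). -/
open FirstOrder FirstOrder.Language

universe u v w

variable {L : FirstOrder.Language.{u, v}} {M : Type w} [L.Structure M]

theorem myRealizeIInf {L' : FirstOrder.Language.{u, v}} {M' : Type w} [L'.Structure M']
    {α β : Type*} [Fintype β] (g : β → L'.Formula α) (v : α → M') :
    Formula.Realize (BoundedFormula.iInf g) v ↔ ∀ b ∈ (Finset.univ : Finset β), (g b).Realize v := by
  simp [Formula.Realize]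

/-- For `M` atomic and strongly `ω`-homogeneous over `A`, `X` an `A`-definable subset of `Mᵏ`
and `f : Aut(M/A) → X`: the graph of `f` is definable iff `f(σ) = h(σ(b̄), b̄)` for some
`A`-definable partial function `h` and tuple `b̄`. -/
theorem statement14 (A : Set M) (hat : AtomicOver (L := L) A) (hhom : StronglyOmegaHomOver (L := L) A)
    (k : ℕ) (θX : (L[[A]]).Formula (Fin k))
    (f : autFix L M A → (Fin k → M)) (hf : ∀ σ, θX.Realize (f σ)) :
    (∃ (n : ℕ) (b : Fin n → M) (φ : (L[[A]]).Formula ((Fin n ⊕ Fin n) ⊕ Fin k)),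
      ∀ (σ : autFix L M A) (c : Fin k → M), θX.Realize c →
        (f σ = c ↔ φ.Realize (Sum.elim (Sum.elim (fun i => σ.1 (b i)) b) c))) ↔
    (∃ (n : ℕ) (b : Fin n → M) (θ : (L[[A]]).Formula ((Fin n ⊕ Fin n) ⊕ Fin k)),
      (∀ (a d : Fin n → M) (c c' : Fin k → M),
        θ.Realize (Sum.elim (Sum.elim a d) c) → θ.Realize (Sum.elim (Sum.elim a d) c') →
        c = c') ∧
      ∀ σ : autFix L M A, θ.Realize (Sum.elim (Sum.elim (fun i => σ.1 (b i)) b) (f σ))) := by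

  constructor
  · rintro ⟨n, b, φ, hφ⟩
    refine ⟨n, b, ?_, ?_, ?_⟩
    -- θ(x,y,z) := φ(x,y,z) ∧ θX(z) ∧ ∀ z', (φ(x,y,z') ∧ θX(z')) → z' = z
    · exact φ ⊓ (θX.relabel Sum.inr) ⊓
        (((φ.relabel (Sum.elim (fun p => Sum.inl (Sum.inl p))
              (fun i : Fin k => Sum.inr i)) ⊓
           θX.relabel (fun i : Fin k => Sum.inr i)).imp
          (BoundedFormula.iInf (fun i : Fin k =>
            Term.equal (Term.var (Sum.inr i)) (Term.var (Sum.inl (Sum.inr i)))))).iAlls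
          (Fin k))
    · intro a d c c' h1 h2
      simp only [Formula.realize_inf, Formula.realize_relabel, Formula.realize_iAlls,
        Formula.realize_imp, Formula.realize_equal, BoundedFormula.realize_iInf,
        Term.realize_var, Finset.mem_univ, forall_true_left, id] at h1 h2
      obtain ⟨⟨hφ1, hX1⟩, hu1⟩ := h1
      obtain ⟨⟨hφ2, hX2⟩, _⟩ := h2
      have := hu1 c' ⟨?_, ?_⟩
      · rw [myRealizeIInf] at this
        simp only [Formula.realize_equal, Term.realize_var, Finset.mem_univ,
          forall_true_left] at this
        funext i
        exact (this i).symm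
      · convert hφ2 using 2
        funext v
        cases v with
        | inl p => rfl
        | inr i => rfl
      · exact hX2
    · intro σ
      simp only [Formula.realize_inf, Formula.realize_relabel, Formula.realize_iAlls,
        Formula.realize_imp, Formula.realize_equal, BoundedFormula.realize_iInf,
        Term.realize_var, Finset.mem_univ, forall_true_left, id]
      refine ⟨⟨(hφ σ (f σ) (hf σ)).mp rfl, hf σ⟩, ?_⟩
      rintro c' ⟨h1, h2⟩
      have hc' : f σ = c' := by
        refine (hφ σ c' ?_).mpr ?_
        · exact h2
        · convert h1 using 2
          funext v
          cases v with
          | inl p => rfl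
          | inr i => rfl
      rw [myRealizeIInf]
      simp only [Formula.realize_equal, Term.realize_var, Finset.mem_univ, forall_true_left]
      intro i
      rw [← hc']
      rfl
  · rintro ⟨n, b, θ, hpart, hθ⟩
    refine ⟨n, b, θ, fun σ c hc => ⟨fun h => h ▸ hθ σ, fun h => ?_⟩⟩
    exact hpart _ _ _ _ (hθ σ) h
end

section
/- Assume M is strongly ω-homogeneous over A. Let X ⊆ Mᵏ be the set of realizations in M of an L-formula with parameters from A in k free variables, let f : Aut(M/A) → X be a function, let b̄ be an n-tuple from M and φ(x̄,ȳ,z̄) an L-formula with parameters from A such that for all σ ∈ Aut(M/A) and all c̄ ∈ X: f(σ) = c̄ if and only if M ⊨ φ(σ(b̄), b̄, c̄), and let ψ(x̄) be an L-formula with parameters from A isolating tp(b̄/A). Then for every n-tuple ā from M with M ⊨ ψ(ā), there is exactly one k-tuple c̄ ∈ X with M ⊨ φ(ā, b̄, c̄); i.e., M ⊨ ∀x̄(ψ(x̄) → ∃!z̄ (z̄ ∈ X ∧ φ(x̄, b̄, z̄))). -/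
open FirstOrder FirstOrder.Language

universe u v w

variable {L : FirstOrder.Language.{u, v}} {M : Type w} [L.Structure M]

theorem Isolates.realize_iff {A : Set M} {n : ℕ} {ψ : (L[[A]]).Formula (Fin n)} {b : Fin n → M}
    (hiso : Isolates A ψ b) {a : Fin n → M} (ha : ψ.Realize a) (χ : (L[[A]]).Formula (Fin n)) :
    χ.Realize b ↔ χ.Realize a := by
  refine ⟨fun hb => hiso.2 χ hb a ha, fun haχ => ?_⟩
  by_contra hb
  exact Formula.realize_not.mp (hiso.2 χ.not (Formula.realize_not.mpr hb) a ha) haχ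

theorem StronglyOmegaHomOver.exists_autFix_comp_eq {A : Set M}
    (hhom : StronglyOmegaHomOver (L := L) A) {n : ℕ} {ψ : (L[[A]]).Formula (Fin n)}
    {b : Fin n → M} (hiso : Isolates A ψ b) {a : Fin n → M} (ha : ψ.Realize a) :
    ∃ σ : autFix L M A, (fun i => σ.1 (b i)) = a := by
  obtain ⟨σ, hσ, hσb⟩ := hhom n b a (hiso.realize_iff ha)
  exact ⟨⟨σ, hσ⟩, funext hσb⟩

/-- If `M` is strongly `ω`-homogeneous over `A`, `f : Aut(M/A) → X` has definable graph via
`φ` and `b̄`, and `ψ` isolates `tp(b̄/A)`, then for every realization `ā` of `ψ` in `M`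
there is exactly one `c̄ ∈ X` with `M ⊨ φ(ā, b̄, c̄)`. -/
theorem statement15 (A : Set M) (hhom : StronglyOmegaHomOver (L := L) A)
    (k n : ℕ) (θX : (L[[A]]).Formula (Fin k))
    (f : autFix L M A → (Fin k → M)) (hf : ∀ σ, θX.Realize (f σ))
    (b : Fin n → M) (φ : (L[[A]]).Formula ((Fin n ⊕ Fin n) ⊕ Fin k))
    (hgraph : ∀ (σ : autFix L M A) (c : Fin k → M), θX.Realize c →
      (f σ = c ↔ φ.Realize (Sum.elim (Sum.elim (fun i => σ.1 (b i)) b) c)))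
    (ψ : (L[[A]]).Formula (Fin n)) (hiso : Isolates (L := L) A ψ b) :
    ∀ a : Fin n → M, ψ.Realize a →
      ∃! c : Fin k → M, θX.Realize c ∧ φ.Realize (Sum.elim (Sum.elim a b) c) := by
  intro a ha
  obtain ⟨σ, hσb⟩ := StronglyOmegaHomOver.exists_autFix_comp_eq hhom hiso ha
  have hgraph_a :
      ∀ c, θX.Realize c → (f σ = c ↔ φ.Realize (Sum.elim (Sum.elim a b) c)) := by
    simpa only [hσb] using hgraph σ
  exact ⟨f σ, ⟨hf σ, (hgraph_a _ (hf σ)).mp rfl⟩,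
    fun c ⟨hc, hφc⟩ => ((hgraph_a c hc).mpr hφc).symm⟩
end
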